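/- arXiv:1103.0093 — 6 statements merged into one kernel-verified Lean document; each statement's English description precedes it below -/
import Mathlib

section
/- Let (α_1,…,α_n, τ) be a nondegenerate compatible tuple on V and suppose there exist indices i,j such that α_i maps every vector outside ker τ to a vector outside ker τ, and likewise for α_j. Then there exists a nonzero scalar λ ∈ K such that α_i = λ·α_j; moreover λ = τ(α_i(u))/τ(α_j(u)) for any u with τ(u) ≠ 0. -/
set_option linter.unusedSectionVars false

variable {K V : Type*} [Field K] [CharZero K] [AddCommGroup V] [Module K V]

/-! The first compatibility condition says `τ ∘ α_k = c_k • τ` with `c_k = τ (α_k u) / τ u`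
for any `u ∉ ker τ`. Taking `x = y = v` in the second one gives
`τ (α_i v) • α_j v = τ (α_j v) • α_i v`, so `α_i v = (c_i / c_j) • α_j v` whenever `τ v ≠ 0`.
These vectors span `V`, since `v = (v + u) - u`, hence `α_i = (c_i / c_j) • α_j`. -/

theorem LinearMap.ext_of_apply_ne_zero {R M W : Type*} [Semiring R] [AddCommGroup M] [Module R M]
    [AddCommGroup W] [Module R W] (τ : M →ₗ[R] R) {u : M} (hu : τ u ≠ 0) {f g : M →ₗ[R] W}
    (h : ∀ v, τ v ≠ 0 → f v = g v) : f = g := by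
  ext v
  by_cases hv : τ v = 0
  · have hvu : τ (v + u) ≠ 0 := by rwa [map_add, hv, zero_add]
    simpa [map_add, h u hu] using h (v + u) hvu
  · exact h v hv

theorem LinearMap.apply_eq_mul_of_mul_comm {R M : Type*} [Field R] [AddCommGroup M]
    [Module R M] (τ : M →ₗ[R] R) (f : M →ₗ[R] M)
    (hf : ∀ x y, τ (f x) * τ y = τ x * τ (f y)) {u : M} (hu : τ u ≠ 0) (x : M) :
    τ (f x) = τ (f u) / τ u * τ x := by
  rw [div_mul_eq_mul_div, eq_div_iff hu, mul_comm (τ (f u))]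
  exact hf x u

theorem alpha_proportional_general (n : ℕ) (α : Fin n → V →ₗ[K] V) (τ : V →ₗ[K] K)
    (hc1 : ∀ (i : Fin n) (x y : V), τ (α i x) * τ y = τ x * τ (α i y))
    (hc2 : ∀ (i j : Fin n) (x y : V), τ (α i x) • α j y = τ (α j y) • α i x)
    (hker_top : LinearMap.ker τ ≠ ⊤)
    (i j : Fin n)
    (hi : ∀ x : V, τ x ≠ 0 → τ (α i x) ≠ 0)
    (hj : ∀ x : V, τ x ≠ 0 → τ (α j x) ≠ 0) :
    ∃ lam : K, lam ≠ 0 ∧ α i = lam • α j ∧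
      ∀ u : V, τ u ≠ 0 → lam = τ (α i u) / τ (α j u) := by
  obtain ⟨u, hu⟩ : ∃ u, τ u ≠ 0 := by
    by_contra! h
    exact hker_top (LinearMap.ker_eq_top.mpr (LinearMap.ext h))
  have hτi := τ.apply_eq_mul_of_mul_comm (α i) (hc1 i) hu
  have hτj := τ.apply_eq_mul_of_mul_comm (α j) (hc1 j) hu
  have hprop : α i = (τ (α i u) / τ (α j u)) • α j := by
    refine τ.ext_of_apply_ne_zero hu fun v hv => ?_
    have hratio : τ (α i v) / τ (α j v) = τ (α i u) / τ (α j u) := by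
      rw [hτi, hτj]
      field_simp [hj u hu]
    rw [LinearMap.smul_apply, ← hratio, div_eq_inv_mul, mul_smul, hc2 i j v v,
      inv_smul_smul₀ (hj v hv)]
  refine ⟨_, div_ne_zero (hi u hu) (hj u hu), hprop, fun w hw => ?_⟩
  rw [eq_div_iff (hj w hw), LinearMap.congr_fun hprop w, LinearMap.smul_apply, map_smul,
    smul_eq_mul]

/-- for a nondegenerate compatible tuple, if α_i and α_j both map the
complement U of ker τ into U, then α_i = λ α_j with λ = τ(α_i(u))/τ(α_j(u)) ≠ 0 for any
u ∈ U. -/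
theorem alpha_proportional (n : ℕ) (α : Fin n → V →ₗ[K] V) (τ : V →ₗ[K] K)
    (hc1 : ∀ (i : Fin n) (x y : V), τ (α i x) * τ y = τ x * τ (α i y))
    (hc2 : ∀ (i j : Fin n) (x y : V), τ (α i x) • α j y = τ (α j y) • α i x)
    (hker_top : LinearMap.ker τ ≠ ⊤) (hker_bot : LinearMap.ker τ ≠ ⊥)
    (i j : Fin n)
    (hi : ∀ x : V, τ x ≠ 0 → τ (α i x) ≠ 0)
    (hj : ∀ x : V, τ x ≠ 0 → τ (α j x) ≠ 0) :
    ∃ lam : K, lam ≠ 0 ∧ α i = lam • α j ∧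
      ∀ u : V, τ u ≠ 0 → lam = τ (α i u) / τ (α j u) :=
  alpha_proportional_general n α τ hc1 hc2 hker_top i j hi hj
end

section
/- Let (α_1,…,α_n, τ) be a nondegenerate compatible tuple on V and suppose there exist indices i,j such that α_i(U) ⊆ U and α_j(U) ⊆ ker τ, where U = {x ∈ V : τ(x) ≠ 0}. Then α_j = 0. -/
set_option linter.unusedSectionVars false

variable {K V : Type*} [Field K] [CharZero K] [AddCommGroup V] [Module K V]

/-- for a nondegenerate compatible tuple, if α_i(U) ⊆ U and
α_j(U) ⊆ ker τ, where U = {x : τ x ≠ 0}, then α_j = 0. -/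
theorem alpha_zero (n : ℕ) (α : Fin n → V →ₗ[K] V) (τ : V →ₗ[K] K)
    (hc1 : ∀ (i : Fin n) (x y : V), τ (α i x) * τ y = τ x * τ (α i y))
    (hc2 : ∀ (i j : Fin n) (x y : V), τ (α i x) • α j y = τ (α j y) • α i x)
    (hker_top : LinearMap.ker τ ≠ ⊤) (hker_bot : LinearMap.ker τ ≠ ⊥)
    (i j : Fin n)
    (hi : ∀ x : V, τ x ≠ 0 → τ (α i x) ≠ 0)
    (hj : ∀ x : V, τ x ≠ 0 → τ (α j x) = 0) :
    α j = 0 := by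
  obtain ⟨u, hu⟩ : ∃ u, τ u ≠ 0 := by
    by_contra h
    push_neg at h
    exact hker_top (by ext x; simp [LinearMap.mem_ker, h x])
  have key : ∀ y : V, τ y ≠ 0 → α j y = 0 := by
    intro y hy
    have h2 := hc2 i j u y
    rw [hj y hy, zero_smul] at h2
    exact (smul_eq_zero.mp h2).resolve_left (hi u hu)
  ext y
  by_cases hy : τ y = 0
  · have h1 : α j (y + u) = 0 := key (y + u) (by simp [hy, hu])
    have h2 : α j u = 0 := key u hu
    have : α j y + α j u = 0 := by rw [← map_add]; exact h1
    simpa [h2] using this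
  · simpa using key y hy
end

section
/- Let (V, φ, α_1,…,α_{n−1}) be an n-Hom-Nambu-Lie algebra, τ a φ-trace, and α_n : V → V linear such that the compatibility conditions τ(α_i(x))τ(y) = τ(x)τ(α_i(y)) and τ(α_i(x))α_j(y) = τ(α_j(y))α_i(x) hold for all i,j ∈ {1,…,n}. If a ∈ V satisfies α_n(a) = a, then (V, π_a(φ_τ), α_1,…,α_{n−1}) is an n-Hom-Nambu-Lie algebra, with (π_a φ_τ)(x_1,…,x_n) = Σ_{k=1}^n (−1)^k τ(x_k) φ(x_1,…,x̂_k,…,x_n, a) + (−1)^{n+1} τ(a) φ(x_1,…,x_n). -/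
set_option linter.unusedSectionVars false

variable {K V : Type*} [Field K] [CharZero K] [AddCommGroup V] [Module K V]

/-- The `τ`-extension of an `m`-ary map `f` to an `(m+1)`-ary map:
`φ_τ(x_1,…,x_{m+1}) = Σ_{k=1}^{m+1} (−1)^k τ(x_k) φ(x_1,…,x̂_k,…,x_{m+1})`. -/
def insTau (m : ℕ) (τ : V →ₗ[K] K) (f : (Fin m → V) → V) :
    (Fin (m + 1) → V) → V :=
  fun x => ∑ k : Fin (m + 1), (-1 : K) ^ (k.val + 1) • τ (x k) • f (x ∘ k.succAbove)

/-- The Hom-Nambu-Jacobi identity for an `(n+1)`-ary bracket `φ` with twisting maps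
`α_1,…,α_n`. -/
def HomNambuJacobi (n : ℕ) (φ : V [⋀^Fin (n + 1)]→ₗ[K] V)
    (α : Fin n → V →ₗ[K] V) : Prop :=
  ∀ (x : Fin n → V) (y : Fin (n + 1) → V),
    φ (Fin.snoc (fun i => α i (x i)) (φ y)) =
      ∑ k : Fin (n + 1), φ (fun j =>
        if h : j.val < k.val then
          α ⟨j.val, lt_of_lt_of_le h (Nat.lt_succ_iff.mp k.isLt)⟩ (y j)
        else if h' : j.val = k.val then φ (Fin.snoc x (y k))
        else α ⟨j.val - 1, by have := j.isLt; omega⟩ (y j))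

/-!
The compatibility condition `τ (α_i x) • α_j y = τ (α_j y) • α_i x` is very restrictive: either
`τ` vanishes on the images of all `α_i` (and on `a = α_n a`), or all these images, `a` included,
lie on one line `K ∙ v`. The bracket `ψ = π_a(φ_τ)` takes values in `ker τ` because `τ ∘ φ = 0`,
so both sides of the Hom-Nambu-Jacobi identity for `ψ` only evaluate `ψ` on tuples with one entry
in `ker τ` and all other entries among the values of the `α_i`; and `ψ` vanishes on all such
tuples. In the first case every term of `ψ` carries a factor `τ (z k)` or `τ a` equal to zero; in
the second, `ψ z = ± (n - 1) τ a φ z`, which vanishes since either `n = 1` or `φ` has two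
collinear arguments (for `n = 0` the identity is trivial).
-/

open Function Fin

theorem neg_one_pow_zsmul {R M : Type*} [Ring R] [AddCommGroup M] [Module R M] (m : ℕ) (x : M) :
    (-1 : ℤ) ^ m • x = (-1 : R) ^ m • x := by
  rw [← Int.cast_smul_eq_zsmul R]
  push_cast
  rfl

namespace AlternatingMap

variable {R M N : Type*} [CommRing R] [AddCommGroup M] [Module R M] [AddCommGroup N] [Module R N]
  {n : ℕ}

theorem map_snoc (f : M [⋀^Fin (n + 1)]→ₗ[R] N) (v : Fin n → M) (w : M) :
    f (snoc v w) = (-1 : R) ^ n • f (Matrix.vecCons w v) := by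
  rw [← insertNth_last', map_insertNth, val_last, neg_one_pow_zsmul (R := R)]

theorem map_cons_removeNth (f : M [⋀^Fin (n + 1)]→ₗ[R] N) (x : Fin (n + 1) → M)
    (k : Fin (n + 1)) (w : M) :
    f (Matrix.vecCons w (k.removeNth x)) = (-1 : R) ^ (k : ℕ) • f (update x k w) := by
  rw [← neg_one_pow_smul_map_insertNth, insertNth_removeNth, neg_one_pow_zsmul (R := R)]

theorem map_eq_zero_of_mem_span_singleton (f : M [⋀^Fin (n + 1)]→ₗ[R] N) {z : Fin (n + 1) → M}
    {v : M} {i j : Fin (n + 1)} (hij : i ≠ j) (hi : z i ∈ R ∙ v) (hj : z j ∈ R ∙ v) :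
    f z = 0 := by
  obtain ⟨s, hs⟩ := Submodule.mem_span_singleton.1 hi
  obtain ⟨t, ht⟩ := Submodule.mem_span_singleton.1 hj
  have hz : z = update (update z i (s • v)) j (t • v) := by
    rw [hs, ht, update_eq_self, update_eq_self]
  rw [hz, map_update_smul, update_comm hij, map_update_smul,
    f.map_eq_zero_of_eq _ (by rw [update_of_ne hij.symm, update_self, update_self]) hij,
    smul_zero, smul_zero]

/-- The paper's `π_a(φ_τ)`. -/
def piTau (φ : M [⋀^Fin (n + 1)]→ₗ[R] N) (τ : M →ₗ[R] R) (a : M) :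
    M [⋀^Fin (n + 1)]→ₗ[R] N :=
  (-1 : R) ^ (n + 1) • (alternatizeUncurryFin (τ.smulRight (φ.curryLeft a)) - τ a • φ)

variable (φ : M [⋀^Fin (n + 1)]→ₗ[R] N) (τ : M →ₗ[R] R) (a : M)

theorem piTau_apply (x : Fin (n + 1) → M) :
    piTau φ τ a x = (-1 : R) ^ (n + 1) • (∑ k, τ (x k) • φ (update x k a) - τ a • φ x) := by
  simp only [piTau, smul_apply, sub_apply, alternatizeUncurryFin_apply, LinearMap.smulRight_apply,
    curryLeft_apply_apply, map_cons_removeNth, neg_one_pow_zsmul (R := R)]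
  congr 2
  refine Finset.sum_congr rfl fun k _ => ?_
  rw [smul_comm _ (τ (x k)), smul_smul ((-1 : R) ^ (k : ℕ)), ← pow_add, Even.neg_one_pow ⟨_, rfl⟩,
    one_smul]

theorem piTau_apply_snoc (x : Fin (n + 1) → M) :
    piTau φ τ a x = ∑ k : Fin (n + 1), (-1 : R) ^ ((k : ℕ) + 1) • τ (x k) •
        φ (snoc (x ∘ k.succAbove) a) + (-1 : R) ^ (n + 2) • τ a • φ x := by
  rw [piTau_apply, smul_sub, Finset.smul_sum, sub_eq_add_neg, ← neg_smul, pow_succ _ (n + 1),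
    mul_neg_one]
  congr 1
  refine Finset.sum_congr rfl fun k _ => ?_
  have hsign : (-1 : R) ^ (n + 1) = (-1) ^ ((k : ℕ) + 1) * (-1) ^ n * (-1) ^ (k : ℕ) := by
    rw [← pow_add, ← pow_add, show (k : ℕ) + 1 + n + k = n + 1 + 2 * k by ring, pow_add _ (n + 1),
      pow_mul, neg_one_sq, one_pow, mul_one]
  rw [map_snoc, show x ∘ k.succAbove = k.removeNth x from rfl, map_cons_removeNth, hsign]
  module

theorem tau_piTau (φ : M [⋀^Fin (n + 1)]→ₗ[R] M) (τ : M →ₗ[R] R) (a : M)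
    (htrace : ∀ x, τ (φ x) = 0) (x : Fin (n + 1) → M) : τ (piTau φ τ a x) = 0 := by
  simp [piTau_apply, htrace]

theorem piTau_eq_zero_of_tau_eq_zero (ha : τ a = 0) {z : Fin (n + 1) → M}
    (hz : ∀ j, τ (z j) = 0) : piTau φ τ a z = 0 := by
  simp [piTau_apply, ha, hz]

theorem tau_smul_map_update_of_mem_span_singleton {z : Fin (n + 1) → M} {v : M} {k : Fin (n + 1)}
    (hk : z k ∈ R ∙ v) (ha : a ∈ R ∙ v) : τ (z k) • φ (update z k a) = τ a • φ z := by
  obtain ⟨s, hs⟩ := Submodule.mem_span_singleton.1 hk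
  obtain ⟨μ, rfl⟩ := Submodule.mem_span_singleton.1 ha
  conv_rhs => rw [← update_eq_self k z, ← hs]
  simp only [← hs, map_smul, map_update_smul, smul_smul, smul_eq_mul]
  ring_nf

/-- The `n` collinear entries contribute `n • τ a • φ z` against `-τ a • φ z`: this cancels when
`n = 1`, and `φ z = 0` as soon as two entries are collinear. -/
theorem piTau_eq_zero_of_mem_span_singleton (hn : n ≠ 0) {z : Fin (n + 1) → M} {v : M}
    {i : Fin (n + 1)} (hi : τ (z i) = 0) (hz : ∀ j ≠ i, z j ∈ R ∙ v) (ha : a ∈ R ∙ v) :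
    piTau φ τ a z = 0 := by
  rw [piTau_apply, sum_univ_succAbove _ i, hi, zero_smul, zero_add,
    Finset.sum_congr rfl fun j _ =>
      tau_smul_map_update_of_mem_span_singleton φ τ a (hz _ (succAbove_ne i j)) ha,
    Finset.sum_const, Finset.card_univ, Fintype.card_fin]
  obtain _ | _ | m := n
  · exact absurd rfl hn
  · simp
  · have hφ : φ z = 0 := map_eq_zero_of_mem_span_singleton φ
      ((succAbove_right_injective (p := i)).ne (zero_ne_one' (Fin (m + 2))))
      (hz _ (succAbove_ne i 0)) (hz _ (succAbove_ne i 1))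
    simp [hφ]

end AlternatingMap

section HomNambuJacobi

variable {F E : Type*} [Field F] [AddCommGroup E] [Module F E]

theorem homNambuJacobi_zero (ψ : E [⋀^Fin 1]→ₗ[F] E) (α : Fin 0 → E →ₗ[F] E) :
    HomNambuJacobi 0 ψ α := by
  intro x y
  simp only [snoc_zero, sum_univ_succ, sum_univ_zero, add_zero]
  congr 1
  funext j
  obtain rfl : j = 0 := fin_one_eq_zero j
  simp only [lt_self_iff_false, dite_false, dite_true]
  congr 1
  funext i
  rw [fin_one_eq_zero i]

theorem homNambuJacobi_of_map_eq_zero {n : ℕ} {ψ : E [⋀^Fin (n + 1)]→ₗ[F] E}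
    {α : Fin n → E →ₗ[F] E} (P Q : E → Prop) (hP : ∀ i x, P (α i x)) (hQ : ∀ y, Q (ψ y))
    (h : ∀ (p : Fin (n + 1)) (z : Fin (n + 1) → E), Q (z p) → (∀ j ≠ p, P (z j)) → ψ z = 0) :
    HomNambuJacobi n ψ α := by
  intro x y
  rw [h (last n) _ (by rw [snoc_last]; exact hQ y) fun j hj => ?_, eq_comm]
  · refine Finset.sum_eq_zero fun k _ => h k _ (by simp [hQ]) fun j hj => ?_
    split_ifs with hjk hjk'
    · exact hP _ _
    · exact absurd (Fin.ext hjk') hj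
    · exact hP _ _
  · obtain ⟨i, rfl⟩ := exists_castSucc_eq.2 hj
    rw [snoc_castSucc]
    exact hP i (x i)

end HomNambuJacobi

open AlternatingMap in
theorem updown_HomNambuLie_general (n : ℕ) (φ : V [⋀^Fin (n + 1)]→ₗ[K] V)
    (α : Fin n → V →ₗ[K] V)
    (τ : V →ₗ[K] K) (htrace : ∀ x : Fin (n + 1) → V, τ (φ x) = 0)
    (αlast : V →ₗ[K] V)
    (α' : Fin (n + 1) → V →ₗ[K] V) (hα' : α' = Fin.snoc α αlast)
    (hc2 : ∀ (i j : Fin (n + 1)) (x y : V),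
      τ (α' i x) • α' j y =
        τ (α' j y) • α' i x)
    (a : V) (ha : αlast a = a) :
    ∃ ψ : V [⋀^Fin (n + 1)]→ₗ[K] V,
      (∀ x : Fin (n + 1) → V,
        ψ x = (∑ k : Fin (n + 1), (-1 : K) ^ (k.val + 1) • τ (x k) •
                φ (Fin.snoc (x ∘ k.succAbove) a))
              + (-1 : K) ^ (n + 2) • τ a • φ x) ∧
      HomNambuJacobi n ψ α := by
  refine ⟨piTau φ τ a, piTau_apply_snoc φ τ a, ?_⟩
  obtain rfl | hn := eq_or_ne n 0
  · exact homNambuJacobi_zero _ _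
  have hα : ∀ i x, α i x = α' i.castSucc x := by simp [hα']
  have ha' : a = α' (last n) a := by simp [hα', ha]
  by_cases hτα : ∀ i x, τ (α' i x) = 0
  · refine homNambuJacobi_of_map_eq_zero (τ · = 0) (τ · = 0) (fun i x => hα i x ▸ hτα _ _)
      (tau_piTau φ τ a htrace) fun p z hp hz => piTau_eq_zero_of_tau_eq_zero φ τ a
        (ha' ▸ hτα _ _) fun j => if hj : j = p then hj ▸ hp else hz j hj
  push Not at hτα
  obtain ⟨i₀, x₀, hv⟩ := hτα
  have hline : ∀ i x, α' i x ∈ K ∙ α' i₀ x₀ := fun i x =>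
    Submodule.mem_span_singleton.2
      ⟨(τ (α' i₀ x₀))⁻¹ * τ (α' i x), by rw [mul_smul, ← hc2, inv_smul_smul₀ hv]⟩
  exact homNambuJacobi_of_map_eq_zero (· ∈ K ∙ α' i₀ x₀) (τ · = 0)
    (fun i x => hα i x ▸ hline _ _) (tau_piTau φ τ a htrace) fun p z hp hz =>
      piTau_eq_zero_of_mem_span_singleton φ τ a hn hp hz (ha' ▸ hline _ _)

/-- under the compatibility conditions, inserting a fixed point a of
α_{n+1} into the last slot of φ_τ yields again a Hom-Nambu-Lie algebra with the original
twisting maps, and π_a(φ_τ) is given by the displayed formula. (Here the original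
bracket φ is (n+1)-ary with twisting maps α_1,…,α_n.) -/
theorem updown_HomNambuLie (n : ℕ) (φ : V [⋀^Fin (n + 1)]→ₗ[K] V)
    (α : Fin n → V →ₗ[K] V) (hφ : HomNambuJacobi n φ α)
    (τ : V →ₗ[K] K) (htrace : ∀ x : Fin (n + 1) → V, τ (φ x) = 0)
    (αlast : V →ₗ[K] V)
    (α' : Fin (n + 1) → V →ₗ[K] V) (hα' : α' = Fin.snoc α αlast)
    (hc1 : ∀ (i : Fin (n + 1)) (x y : V),
      τ (α' i x) * τ y = τ x * τ (α' i y))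
    (hc2 : ∀ (i j : Fin (n + 1)) (x y : V),
      τ (α' i x) • α' j y =
        τ (α' j y) • α' i x)
    (a : V) (ha : αlast a = a) :
    ∃ ψ : V [⋀^Fin (n + 1)]→ₗ[K] V,
      (∀ x : Fin (n + 1) → V,
        ψ x = (∑ k : Fin (n + 1), (-1 : K) ^ (k.val + 1) • τ (x k) •
                φ (Fin.snoc (x ∘ k.succAbove) a))
              + (-1 : K) ^ (n + 2) • τ a • φ x) ∧
      HomNambuJacobi n ψ α :=
  updown_HomNambuLie_general n φ α τ htrace αlast α' hα' hc2 a ha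
end

section
/- If φ ∈ Λ^n(V,V) satisfies the generalized Jacobi identity (i_φ φ = 0) and τ ∈ Λ^p(V) is a φ-compatible p-form (i.e., τ(φ(x_1,…,x_n), y_1,…,y_{p−1}) = 0 for all arguments), then the vector-valued (n+p)-form τ∧φ also satisfies the generalized Jacobi identity, i.e., i_{τ∧φ}(τ∧φ) = 0. -/
set_option linter.unusedSectionVars false

variable {K V W : Type*} [Field K] [CharZero K] [AddCommGroup V] [Module K V]
  [AddCommGroup W] [Module K W]

/-- Interior product of a vector-valued `k`-form `φ` into an `(l+1)`-form `ψ`: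
`(i_φ ψ)(x_1,…,x_{k+l}) = (1/(k! l!)) Σ_{σ} sgn(σ) ψ(φ(x_{σ(1)},…,x_{σ(k)}), x_{σ(k+1)},…)`. -/
def interiorProd (k l : ℕ) (φ : (Fin k → V) → V) (ψ : (Fin (l + 1) → V) → W) :
    (Fin (k + l) → V) → W :=
  fun x => ((k.factorial * l.factorial : K))⁻¹ •
    ∑ σ : Equiv.Perm (Fin (k + l)), ((Equiv.Perm.sign σ : ℤ) : K) •
      ψ (Fin.cons (φ (fun i => x (σ (Fin.castAdd l i))))
        (fun i => x (σ (Fin.natAdd k i))))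

/-- Wedge of a scalar `p`-form `τ` with a (possibly vector-valued) `k`-form `φ`:
`(τ∧φ)(x_1,…,x_{p+k}) = (1/(p! k!)) Σ_{σ} sgn(σ) τ(x_{σ(1)},…,x_{σ(p)}) φ(x_{σ(p+1)},…)`. -/
def wedgeProd (p k : ℕ) (τ : (Fin p → V) → K) (φ : (Fin k → V) → W) :
    (Fin (p + k) → V) → W :=
  fun x => ((p.factorial * k.factorial : K))⁻¹ •
    ∑ σ : Equiv.Perm (Fin (p + k)), ((Equiv.Perm.sign σ : ℤ) : K) •
      (τ (fun i => x (σ (Fin.castAdd k i))) • φ (fun i => x (σ (Fin.natAdd p i))))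

set_option maxHeartbeats 1000000

open Equiv Fin

instance {q n : ℕ} : NeZero ((q + 1) + (n + 1)) := ⟨by omega⟩

lemma alt_eq_zero_of_coord {m : ℕ} {W' : Type*} [AddCommGroup W'] [Module K W']
    (f : V [⋀^Fin (m + 1)]→ₗ[K] W') (a : V)
    (h : ∀ y : Fin m → V, f (Fin.cons a y) = 0)
    (v : Fin (m + 1) → V) (i : Fin (m + 1)) (hv : v i = a) : f v = 0 := by
  have hperm := f.map_perm v (Equiv.swap 0 i)
  have h0 : (v ∘ Equiv.swap 0 i) 0 = a := by
    simp [Equiv.swap_apply_left, hv]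
  have hz : f (v ∘ Equiv.swap 0 i) = 0 := by
    rw [← Fin.cons_self_tail (v ∘ Equiv.swap 0 i), h0]
    exact h _
  rw [hz] at hperm
  exact (smul_eq_zero_iff_eq _).mp hperm.symm

/-- The tuple fed into the outer wedge product. -/
def Ytup (n q : ℕ) (φ : V [⋀^Fin (n + 1)]→ₗ[K] V) (τ : V [⋀^Fin (q + 1)]→ₗ[K] K)
    (x : Fin (((q + 1) + (n + 1)) + (q + 1 + n)) → V) : Fin ((q + 1) + (n + 1)) → V :=
  Fin.cons (wedgeProd (q + 1) (n + 1) ⇑τ ⇑φ (fun i => x (Fin.castAdd (q + 1 + n) i)))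
    (fun i => x (Fin.natAdd ((q + 1) + (n + 1)) i))

def Gbody (n q : ℕ) (φ : V [⋀^Fin (n + 1)]→ₗ[K] V) (τ : V [⋀^Fin (q + 1)]→ₗ[K] K)
    (ρ : Equiv.Perm (Fin ((q + 1) + (n + 1))))
    (x : Fin (((q + 1) + (n + 1)) + (q + 1 + n)) → V) : V :=
  τ (fun i => Ytup n q φ τ x (ρ (Fin.castAdd (n + 1) i))) •
    φ (fun i => Ytup n q φ τ x (ρ (Fin.natAdd (q + 1) i)))

lemma Ytup_ne_zero (n q : ℕ) (φ : V [⋀^Fin (n + 1)]→ₗ[K] V) (τ : V [⋀^Fin (q + 1)]→ₗ[K] K)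
    (x : Fin (((q + 1) + (n + 1)) + (q + 1 + n)) → V) (s : Fin ((q + 1) + (n + 1)))
    (hs : s ≠ 0) :
    Ytup n q φ τ x s = x (Fin.natAdd ((q + 1) + (n + 1)) (s.pred hs)) := by
  conv_lhs => rw [← Fin.succ_pred s hs]
  rw [Ytup, Fin.cons_succ]

lemma Ytup_zero (n q : ℕ) (φ : V [⋀^Fin (n + 1)]→ₗ[K] V) (τ : V [⋀^Fin (q + 1)]→ₗ[K] K)
    (x : Fin (((q + 1) + (n + 1)) + (q + 1 + n)) → V) :
    Ytup n q φ τ x 0 = wedgeProd (q + 1) (n + 1) ⇑τ ⇑φ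
      (fun i => x (Fin.castAdd (q + 1 + n) i)) := by
  rw [Ytup, Fin.cons_zero]

/-- Case 1: the inner value lands in a τ-slot, so the term vanishes pointwise. -/
lemma Gbody_case1 (n q : ℕ) (φ : V [⋀^Fin (n + 1)]→ₗ[K] V) (τ : V [⋀^Fin (q + 1)]→ₗ[K] K)
    (hcompat : ∀ (x : Fin (n + 1) → V) (y : Fin q → V), τ (Fin.cons (φ x) y) = 0)
    (ρ : Equiv.Perm (Fin ((q + 1) + (n + 1)))) (i0 : Fin (q + 1))
    (h : ρ (Fin.castAdd (n + 1) i0) = 0)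
    (x : Fin (((q + 1) + (n + 1)) + (q + 1 + n)) → V) :
    Gbody n q φ τ ρ x = 0 := by
  rw [Gbody]
  set t : Fin (q + 1) → V := fun i => Ytup n q φ τ x (ρ (Fin.castAdd (n + 1) i)) with htdef
  suffices hτ : τ t = 0 by rw [hτ, zero_smul]
  have ht : t i0 = wedgeProd (q + 1) (n + 1) ⇑τ ⇑φ
      (fun i => x (Fin.castAdd (q + 1 + n) i)) := by
    rw [htdef]; simp only [h]; exact Ytup_zero n q φ τ x
  set L : V →ₗ[K] K := τ.toMultilinearMap.toLinearMap t i0 with hLdef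
  have hLa : ∀ v : V, L v = τ (Function.update t i0 v) := fun v => by
    rw [hLdef]; simp [MultilinearMap.toLinearMap_apply]
  have key : τ t = L (t i0) := by
    rw [hLa, Function.update_eq_self]
  rw [key, ht, wedgeProd, map_smul, map_sum]
  have hz : ∀ π : Equiv.Perm (Fin ((q + 1) + (n + 1))),
      L (((Equiv.Perm.sign π : ℤ) : K) •
        (τ (fun i => (fun i => x (Fin.castAdd (q + 1 + n) i)) (π (Fin.castAdd (n + 1) i))) •
          φ (fun i => (fun i => x (Fin.castAdd (q + 1 + n) i)) (π (Fin.natAdd (q + 1) i))))) = 0 := by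
    intro π
    rw [map_smul, map_smul, hLa]
    have := alt_eq_zero_of_coord τ
      (φ (fun i => x (Fin.castAdd (q + 1 + n) (π (Fin.natAdd (q + 1) i)))))
      (fun y => hcompat _ y)
      (Function.update t i0 (φ (fun i => x (Fin.castAdd (q + 1 + n) (π (Fin.natAdd (q + 1) i))))))
      i0 (Function.update_self i0 _ t)
    rw [this, smul_zero, smul_zero]
  rw [Finset.sum_congr rfl fun π _ => hz π, Finset.sum_const, smul_zero, smul_zero]

lemma core_vanish {N l : ℕ} (f : (Fin N → V) → K) (g : (Fin l → V) → W)
    (ι : Fin l ↪ Fin N)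
    (hf : ∀ (x : Fin N → V) (η : Equiv.Perm (Fin l)),
      f (x ∘ η.viaFintypeEmbedding ι) = f x)
    (hg : ∀ w : Fin l → V,
      ∑ η : Equiv.Perm (Fin l), ((Equiv.Perm.sign η : ℤ) : K) • g (w ∘ η) = 0)
    (z : Fin N → V) :
    ∑ σ : Equiv.Perm (Fin N), ((Equiv.Perm.sign σ : ℤ) : K) •
      (f (z ∘ σ) • g (fun i => z (σ (ι i)))) = 0 := by
  set S := ∑ σ : Equiv.Perm (Fin N), ((Equiv.Perm.sign σ : ℤ) : K) •
      (f (z ∘ σ) • g (fun i => z (σ (ι i)))) with hS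
  have key : ∀ η : Equiv.Perm (Fin l), S = ((Equiv.Perm.sign η : ℤ) : K) •
      ∑ σ : Equiv.Perm (Fin N), ((Equiv.Perm.sign σ : ℤ) : K) •
        (f (z ∘ σ) • g (fun i => z (σ (ι (η i))))) := by
    intro η
    set ηh := η.viaFintypeEmbedding ι with hηh
    have reidx : S = ∑ σ : Equiv.Perm (Fin N), ((Equiv.Perm.sign (σ * ηh) : ℤ) : K) •
        (f (z ∘ ⇑(σ * ηh)) • g (fun i => z ((σ * ηh) (ι i)))) := by
      rw [hS, ← Equiv.sum_comp (Equiv.mulRight ηh)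
        (fun σ => ((Equiv.Perm.sign σ : ℤ) : K) •
          (f (z ∘ σ) • g (fun i => z (σ (ι i)))))]
      exact Finset.sum_congr rfl fun σ _ => rfl
    rw [reidx, Finset.smul_sum]
    refine Finset.sum_congr rfl fun σ _ => ?_
    have h1 : f (z ∘ ⇑(σ * ηh)) = f (z ∘ ⇑σ) := hf (z ∘ ⇑σ) η
    have h2 : (fun i => z ((σ * ηh) (ι i))) = (fun i => z (σ (ι (η i)))) := by
      funext i
      simp only [Equiv.Perm.mul_apply, hηh,
        Equiv.Perm.viaFintypeEmbedding_apply_image]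
    have h3 : Equiv.Perm.sign (σ * ηh) = Equiv.Perm.sign σ * Equiv.Perm.sign η := by
      rw [map_mul, hηh, Equiv.Perm.viaFintypeEmbedding_sign]
    rw [h1, h2, h3]
    simp only [smul_smul]
    congr 1
    push_cast
    ring
  have hcard : (Fintype.card (Equiv.Perm (Fin l)) : K) • S = 0 := by
    have step1 : (Fintype.card (Equiv.Perm (Fin l)) : K) • S
        = ∑ _η : Equiv.Perm (Fin l), S := by
      rw [Finset.sum_const, Finset.card_univ, Nat.cast_smul_eq_nsmul]
    rw [step1]
    have step2 : ∀ η : Equiv.Perm (Fin l), S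
        = ∑ σ : Equiv.Perm (Fin N), ((Equiv.Perm.sign η : ℤ) : K) •
            (((Equiv.Perm.sign σ : ℤ) : K) •
              (f (z ∘ σ) • g (fun i => z (σ (ι (η i)))))) := by
      intro η; rw [key η, Finset.smul_sum]
    calc ∑ _η : Equiv.Perm (Fin l), S
        = ∑ η : Equiv.Perm (Fin l), ∑ σ : Equiv.Perm (Fin N),
            ((Equiv.Perm.sign η : ℤ) : K) • (((Equiv.Perm.sign σ : ℤ) : K) •
              (f (z ∘ σ) • g (fun i => z (σ (ι (η i)))))) :=
          Finset.sum_congr rfl fun η _ => step2 η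
      _ = ∑ σ : Equiv.Perm (Fin N), ∑ η : Equiv.Perm (Fin l),
            ((Equiv.Perm.sign η : ℤ) : K) • (((Equiv.Perm.sign σ : ℤ) : K) •
              (f (z ∘ σ) • g (fun i => z (σ (ι (η i)))))) := Finset.sum_comm
      _ = 0 := by
          refine Finset.sum_eq_zero fun σ _ => ?_
          have h0 : ∑ η : Equiv.Perm (Fin l), ((Equiv.Perm.sign η : ℤ) : K) •
              g (fun i => z (σ (ι (η i)))) = 0 := by
            have := hg (fun i => z (σ (ι i)))
            simpa [Function.comp_def] using this
          calc ∑ η : Equiv.Perm (Fin l), ((Equiv.Perm.sign η : ℤ) : K) •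
                (((Equiv.Perm.sign σ : ℤ) : K) •
                  (f (z ∘ σ) • g (fun i => z (σ (ι (η i))))))
              = ∑ η : Equiv.Perm (Fin l), (((Equiv.Perm.sign σ : ℤ) : K) * f (z ∘ σ)) •
                  (((Equiv.Perm.sign η : ℤ) : K) • g (fun i => z (σ (ι (η i))))) := by
                refine Finset.sum_congr rfl fun η _ => ?_
                simp only [smul_smul]
                congr 1; ring
            _ = (((Equiv.Perm.sign σ : ℤ) : K) * f (z ∘ σ)) •
                  ∑ η : Equiv.Perm (Fin l), ((Equiv.Perm.sign η : ℤ) : K) •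
                    g (fun i => z (σ (ι (η i)))) := (Finset.smul_sum).symm
            _ = 0 := by rw [h0, smul_zero]
  have hne : (Fintype.card (Equiv.Perm (Fin l)) : K) ≠ 0 :=
    Nat.cast_ne_zero.mpr Fintype.card_ne_zero
  rcases smul_eq_zero.mp hcard with h | h
  · exact absurd h hne
  · exact h


section Case2

variable (n q : ℕ) (φ : V [⋀^Fin (n + 1)]→ₗ[K] V) (τ : V [⋀^Fin (q + 1)]→ₗ[K] K)
  (ρ : Equiv.Perm (Fin ((q + 1) + (n + 1)))) (j1 : Fin (n + 1))

lemma ne_zero_castAdd (h : ρ (Fin.natAdd (q + 1) j1) = 0) (i : Fin (q + 1)) :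
    ρ (Fin.castAdd (n + 1) i) ≠ 0 := by
  intro hc
  have he : Fin.castAdd (n + 1) i = Fin.natAdd (q + 1) j1 := ρ.injective (hc.trans h.symm)
  have := congrArg Fin.val he
  simp only [Fin.coe_castAdd, Fin.coe_natAdd] at this
  omega

lemma ne_zero_natAdd (h : ρ (Fin.natAdd (q + 1) j1) = 0) (j : Fin n) :
    ρ (Fin.natAdd (q + 1) (Equiv.swap 0 j1 j.succ)) ≠ 0 := by
  intro hc
  have he : Fin.natAdd (q + 1) (Equiv.swap 0 j1 j.succ) = Fin.natAdd (q + 1) j1 :=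
    ρ.injective (hc.trans h.symm)
  have hval := congrArg Fin.val he
  simp only [Fin.coe_natAdd] at hval
  have he2 : Equiv.swap (0 : Fin (n + 1)) j1 j.succ = j1 := Fin.ext (by omega)
  have := congrArg (Equiv.swap (0 : Fin (n + 1)) j1) he2
  rw [Equiv.swap_apply_self, Equiv.swap_apply_right] at this
  exact Fin.succ_ne_zero j this

/-- Indices (in the big tuple) feeding the outer τ. -/
def tIdx (h : ρ (Fin.natAdd (q + 1) j1) = 0) :
    Fin (q + 1) → Fin (((q + 1) + (n + 1)) + (q + 1 + n)) := fun i =>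
  Fin.natAdd ((q + 1) + (n + 1)) ((ρ (Fin.castAdd (n + 1) i)).pred
    (ne_zero_castAdd n q ρ j1 h i))

/-- Indices feeding the surviving outer-φ slots. -/
def uIdx (h : ρ (Fin.natAdd (q + 1) j1) = 0) :
    Fin n → Fin (((q + 1) + (n + 1)) + (q + 1 + n)) := fun j =>
  Fin.natAdd ((q + 1) + (n + 1)) ((ρ (Fin.natAdd (q + 1) (Equiv.swap 0 j1 j.succ))).pred
    (ne_zero_natAdd n q ρ j1 h j))

/-- Indices feeding the inner τ. -/
def aIdx (π : Equiv.Perm (Fin ((q + 1) + (n + 1)))) :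
    Fin (q + 1) → Fin (((q + 1) + (n + 1)) + (q + 1 + n)) := fun i =>
  Fin.castAdd (q + 1 + n) (π (Fin.castAdd (n + 1) i))

/-- Indices feeding the inner φ. -/
def bIdx (π : Equiv.Perm (Fin ((q + 1) + (n + 1)))) :
    Fin (n + 1) → Fin (((q + 1) + (n + 1)) + (q + 1 + n)) := fun i =>
  Fin.castAdd (q + 1 + n) (π (Fin.natAdd (q + 1) i))

lemma iota_injective (h : ρ (Fin.natAdd (q + 1) j1) = 0)
    (π : Equiv.Perm (Fin ((q + 1) + (n + 1)))) :
    Function.Injective (Fin.addCases (bIdx n q π) (uIdx n q ρ j1 h) :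
      Fin ((n + 1) + n) → Fin (((q + 1) + (n + 1)) + (q + 1 + n))) := by
  intro a b hab
  induction a using Fin.addCases with
  | left ia =>
    induction b using Fin.addCases with
    | left ib =>
      simp only [Fin.addCases_left, Fin.addCases_right] at hab
      have : π (Fin.natAdd (q + 1) ia) = π (Fin.natAdd (q + 1) ib) :=
        Fin.castAdd_injective _ _ hab
      have : Fin.natAdd (q + 1) ia = Fin.natAdd (q + 1) ib := π.injective this
      have := congrArg Fin.val this
      simp only [Fin.coe_natAdd] at this
      exact congrArg _ (Fin.ext (by omega))
    | right jb =>
      simp only [Fin.addCases_left, Fin.addCases_right] at hab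
      have := congrArg Fin.val hab
      simp only [bIdx, uIdx, Fin.coe_castAdd, Fin.coe_natAdd] at this
      have := (π (Fin.natAdd (q + 1) ia)).isLt
      omega
  | right ja =>
    induction b using Fin.addCases with
    | left ib =>
      simp only [Fin.addCases_left, Fin.addCases_right] at hab
      have := congrArg Fin.val hab
      simp only [bIdx, uIdx, Fin.coe_castAdd, Fin.coe_natAdd] at this
      have := (π (Fin.natAdd (q + 1) ib)).isLt
      omega
    | right jb =>
      simp only [Fin.addCases_left, Fin.addCases_right] at hab
      have h1 : ((ρ (Fin.natAdd (q + 1) (Equiv.swap 0 j1 ja.succ))).pred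
            (ne_zero_natAdd n q ρ j1 h ja)) =
          ((ρ (Fin.natAdd (q + 1) (Equiv.swap 0 j1 jb.succ))).pred
            (ne_zero_natAdd n q ρ j1 h jb)) := by
        have := congrArg Fin.val hab
        simp only [uIdx, Fin.coe_natAdd] at this
        exact Fin.ext (by omega)
      have h2 := congrArg Fin.succ h1
      rw [Fin.succ_pred, Fin.succ_pred] at h2
      have h3 := ρ.injective h2
      have h4 : Equiv.swap (0 : Fin (n + 1)) j1 ja.succ = Equiv.swap 0 j1 jb.succ := by
        have := congrArg Fin.val h3
        simp only [Fin.coe_natAdd] at this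
        exact Fin.ext (by omega)
      have h5 := (Equiv.swap (0 : Fin (n + 1)) j1).injective h4
      have h6 := Fin.succ_injective _ h5
      rw [h6]

/-- The embedding collecting the inner-φ indices and the surviving outer-φ indices. -/
def iotaEmb (h : ρ (Fin.natAdd (q + 1) j1) = 0)
    (π : Equiv.Perm (Fin ((q + 1) + (n + 1)))) :
    Fin ((n + 1) + n) ↪ Fin (((q + 1) + (n + 1)) + (q + 1 + n)) :=
  ⟨Fin.addCases (bIdx n q π) (uIdx n q ρ j1 h), iota_injective n q ρ j1 h π⟩

/-- The inner-GJI block. -/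
def gfun : (Fin ((n + 1) + n) → V) → V := fun w =>
  φ (Fin.cons (φ (fun i => w (Fin.castAdd n i))) (fun j => w (Fin.natAdd (n + 1) j)))

/-- The scalar block (product of the two τ's). -/
def fPfun (h : ρ (Fin.natAdd (q + 1) j1) = 0)
    (π : Equiv.Perm (Fin ((q + 1) + (n + 1)))) :
    (Fin (((q + 1) + (n + 1)) + (q + 1 + n)) → V) → K := fun x =>
  τ (fun i => x (tIdx n q ρ j1 h i)) * τ (fun i => x (aIdx n q π i))

lemma tIdx_not_range (h : ρ (Fin.natAdd (q + 1) j1) = 0)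
    (π : Equiv.Perm (Fin ((q + 1) + (n + 1)))) (i : Fin (q + 1)) :
    tIdx n q ρ j1 h i ∉ Set.range ⇑(iotaEmb n q ρ j1 h π) := by
  rintro ⟨c, hc⟩
  induction c using Fin.addCases with
  | left ic =>
    have : iotaEmb n q ρ j1 h π (Fin.castAdd n ic) = bIdx n q π ic := by
      simp [iotaEmb, Fin.addCases_left]
    rw [this] at hc
    have := congrArg Fin.val hc
    simp only [bIdx, tIdx, Fin.coe_castAdd, Fin.coe_natAdd] at this
    have := (π (Fin.natAdd (q + 1) ic)).isLt
    omega
  | right jc =>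
    have : iotaEmb n q ρ j1 h π (Fin.natAdd (n + 1) jc) = uIdx n q ρ j1 h jc := by
      simp [iotaEmb, Fin.addCases_right]
    rw [this] at hc
    have h1 : ((ρ (Fin.natAdd (q + 1) (Equiv.swap 0 j1 jc.succ))).pred
          (ne_zero_natAdd n q ρ j1 h jc)) =
        ((ρ (Fin.castAdd (n + 1) i)).pred (ne_zero_castAdd n q ρ j1 h i)) := by
      have := congrArg Fin.val hc
      simp only [uIdx, tIdx, Fin.coe_natAdd] at this
      exact Fin.ext (by omega)
    have h2 := congrArg Fin.succ h1
    rw [Fin.succ_pred, Fin.succ_pred] at h2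
    have h3 := ρ.injective h2
    have := congrArg Fin.val h3
    simp only [Fin.coe_natAdd, Fin.coe_castAdd] at this
    have := (i : ℕ).lt_succ_self
    have := i.isLt
    omega

lemma aIdx_not_range (h : ρ (Fin.natAdd (q + 1) j1) = 0)
    (π : Equiv.Perm (Fin ((q + 1) + (n + 1)))) (i : Fin (q + 1)) :
    aIdx n q π i ∉ Set.range ⇑(iotaEmb n q ρ j1 h π) := by
  rintro ⟨c, hc⟩
  induction c using Fin.addCases with
  | left ic =>
    have : iotaEmb n q ρ j1 h π (Fin.castAdd n ic) = bIdx n q π ic := by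
      simp [iotaEmb, Fin.addCases_left]
    rw [this] at hc
    have h1 : π (Fin.natAdd (q + 1) ic) = π (Fin.castAdd (n + 1) i) :=
      Fin.castAdd_injective _ _ hc
    have h2 := π.injective h1
    have := congrArg Fin.val h2
    simp only [Fin.coe_natAdd, Fin.coe_castAdd] at this
    have := i.isLt
    omega
  | right jc =>
    have : iotaEmb n q ρ j1 h π (Fin.natAdd (n + 1) jc) = uIdx n q ρ j1 h jc := by
      simp [iotaEmb, Fin.addCases_right]
    rw [this] at hc
    have := congrArg Fin.val hc
    simp only [uIdx, aIdx, Fin.coe_natAdd, Fin.coe_castAdd] at this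
    have := (π (Fin.castAdd (n + 1) i)).isLt
    omega

lemma fPfun_invariant (h : ρ (Fin.natAdd (q + 1) j1) = 0)
    (π : Equiv.Perm (Fin ((q + 1) + (n + 1))))
    (x : Fin (((q + 1) + (n + 1)) + (q + 1 + n)) → V)
    (η : Equiv.Perm (Fin ((n + 1) + n))) :
    fPfun n q τ ρ j1 h π (x ∘ η.viaFintypeEmbedding (iotaEmb n q ρ j1 h π))
      = fPfun n q τ ρ j1 h π x := by
  rw [fPfun, fPfun]
  congr 1
  · congr 1
    funext i
    simp only [Function.comp_apply]
    rw [Equiv.Perm.viaFintypeEmbedding_apply_notMem_range _ _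
      (tIdx_not_range n q ρ j1 h π i)]
  · congr 1
    funext i
    simp only [Function.comp_apply]
    rw [Equiv.Perm.viaFintypeEmbedding_apply_notMem_range _ _
      (aIdx_not_range n q ρ j1 h π i)]

lemma gfun_alt (hGJI : ∀ x : Fin ((n + 1) + n) → V,
      interiorProd (K := K) (n + 1) n ⇑φ ⇑φ x = 0)
    (w : Fin ((n + 1) + n) → V) :
    ∑ η : Equiv.Perm (Fin ((n + 1) + n)), ((Equiv.Perm.sign η : ℤ) : K) •
      gfun n φ (w ∘ η) = 0 := by
  have h0 := hGJI w
  rw [interiorProd] at h0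
  rcases smul_eq_zero.mp h0 with hh | hh
  · exfalso
    have : (((n + 1).factorial * n.factorial : ℕ) : K) ≠ 0 :=
      Nat.cast_ne_zero.mpr (by positivity)
    rw [inv_eq_zero] at hh
    push_cast at this
    exact this hh
  · exact hh

lemma phi_cons_expand (w' : Fin ((q + 1) + (n + 1)) → V) (T : Fin n → V) :
    φ (Fin.cons (wedgeProd (q + 1) (n + 1) ⇑τ ⇑φ w') T)
      = (((q + 1).factorial * (n + 1).factorial : K))⁻¹ •
        ∑ π : Equiv.Perm (Fin ((q + 1) + (n + 1))), ((Equiv.Perm.sign π : ℤ) : K) •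
          (τ (fun i => w' (π (Fin.castAdd (n + 1) i))) •
            φ (Fin.cons (φ (fun i => w' (π (Fin.natAdd (q + 1) i)))) T)) := by
  set Lφ := φ.toMultilinearMap.toLinearMap (Fin.cons 0 T) 0 with hLdef
  have hLa : ∀ v : V, φ (Fin.cons v T) = Lφ v := fun v => by
    rw [hLdef]
    simp [MultilinearMap.toLinearMap_apply, Fin.update_cons_zero]
  rw [hLa, wedgeProd, map_smul, map_sum]
  congr 1
  refine Finset.sum_congr rfl fun π _ => ?_
  rw [map_smul, map_smul, ← hLa]

lemma Gbody_eq (h : ρ (Fin.natAdd (q + 1) j1) = 0)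
    (x : Fin (((q + 1) + (n + 1)) + (q + 1 + n)) → V) :
    Gbody n q φ τ ρ x
      = ((Equiv.Perm.sign (Equiv.swap (0 : Fin (n + 1)) j1) : ℤ) : K) •
        ((((q + 1).factorial * (n + 1).factorial : K))⁻¹ •
          ∑ π : Equiv.Perm (Fin ((q + 1) + (n + 1))), ((Equiv.Perm.sign π : ℤ) : K) •
            (fPfun n q τ ρ j1 h π x •
              gfun n φ (fun i => x (iotaEmb n q ρ j1 h π i)))) := by
  have ht : (fun i => Ytup n q φ τ x (ρ (Fin.castAdd (n + 1) i)))
      = fun i => x (tIdx n q ρ j1 h i) :=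
    funext fun i => Ytup_ne_zero n q φ τ x _ (ne_zero_castAdd n q ρ j1 h i)
  have hswap : φ (fun i => Ytup n q φ τ x (ρ (Fin.natAdd (q + 1) i)))
      = ((Equiv.Perm.sign (Equiv.swap (0 : Fin (n + 1)) j1) : ℤ) : K) •
        φ ((fun i => Ytup n q φ τ x (ρ (Fin.natAdd (q + 1) i))) ∘
          ⇑(Equiv.swap (0 : Fin (n + 1)) j1)) := by
    rw [φ.map_perm (fun i => Ytup n q φ τ x (ρ (Fin.natAdd (q + 1) i)))
        (Equiv.swap (0 : Fin (n + 1)) j1),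
      Units.smul_def, Int.cast_smul_eq_zsmul K, smul_smul, ← Units.val_mul,
      Int.units_mul_self, Units.val_one, one_smul]
  have hcons : ((fun i => Ytup n q φ τ x (ρ (Fin.natAdd (q + 1) i))) ∘
        ⇑(Equiv.swap (0 : Fin (n + 1)) j1))
      = Fin.cons (wedgeProd (q + 1) (n + 1) ⇑τ ⇑φ (fun i => x (Fin.castAdd (q + 1 + n) i)))
          (fun j => x (uIdx n q ρ j1 h j)) := by
    funext a
    refine Fin.cases ?_ ?_ a
    · simp only [Function.comp_apply, Fin.cons_zero, Equiv.swap_apply_left, h]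
      exact Ytup_zero n q φ τ x
    · intro j
      simp only [Function.comp_apply, Fin.cons_succ]
      exact Ytup_ne_zero n q φ τ x _ (ne_zero_natAdd n q ρ j1 h j)
  have hgeq : ∀ π : Equiv.Perm (Fin ((q + 1) + (n + 1))),
      φ (Fin.cons (φ (fun i => (fun i => x (Fin.castAdd (q + 1 + n) i))
          (π (Fin.natAdd (q + 1) i)))) (fun j => x (uIdx n q ρ j1 h j)))
        = gfun n φ (fun i => x (iotaEmb n q ρ j1 h π i)) := by
    intro π
    rw [gfun]
    congr 1
    funext a
    refine Fin.cases ?_ ?_ a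
    · simp only [Fin.cons_zero]
      congr 1
      funext i
      simp [iotaEmb, bIdx, Fin.addCases_left]
    · intro j
      simp only [Fin.cons_succ]
      simp [iotaEmb, Fin.addCases_right]
  rw [Gbody, ht, hswap, hcons, phi_cons_expand]
  rw [Finset.sum_congr rfl fun π _ => by rw [hgeq π]]
  simp only [Finset.smul_sum]
  refine Finset.sum_congr rfl fun π _ => ?_
  simp only [fPfun, aIdx, smul_smul]
  congr 1
  ring

lemma Gbody_case2 (hGJI : ∀ x : Fin ((n + 1) + n) → V,
      interiorProd (K := K) (n + 1) n ⇑φ ⇑φ x = 0)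
    (h : ρ (Fin.natAdd (q + 1) j1) = 0)
    (z : Fin (((q + 1) + (n + 1)) + (q + 1 + n)) → V) :
    ∑ σ : Equiv.Perm (Fin (((q + 1) + (n + 1)) + (q + 1 + n))),
      ((Equiv.Perm.sign σ : ℤ) : K) • Gbody n q φ τ ρ (z ∘ σ) = 0 := by
  rw [Finset.sum_congr rfl fun σ _ => by rw [Gbody_eq n q φ τ ρ j1 h (z ∘ σ)]]
  simp only [Finset.smul_sum]
  rw [Finset.sum_comm]
  refine Finset.sum_eq_zero fun π _ => ?_
  have hcore : ∑ σ : Equiv.Perm (Fin (((q + 1) + (n + 1)) + (q + 1 + n))),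
      ((Equiv.Perm.sign σ : ℤ) : K) •
        (fPfun n q τ ρ j1 h π (z ∘ σ) •
          gfun n φ (fun i => z (σ (iotaEmb n q ρ j1 h π i)))) = 0 :=
    core_vanish (fPfun n q τ ρ j1 h π) (gfun n φ) (iotaEmb n q ρ j1 h π)
      (fun x η => fPfun_invariant n q τ ρ j1 h π x η)
      (fun w => gfun_alt n φ hGJI w) z
  calc ∑ σ : Equiv.Perm (Fin (((q + 1) + (n + 1)) + (q + 1 + n))),
        ((Equiv.Perm.sign σ : ℤ) : K) •
          (((Equiv.Perm.sign (Equiv.swap (0 : Fin (n + 1)) j1) : ℤ) : K) •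
            ((((q + 1).factorial * (n + 1).factorial : K))⁻¹ •
              (((Equiv.Perm.sign π : ℤ) : K) •
                (fPfun n q τ ρ j1 h π (z ∘ σ) •
                  gfun n φ (fun i => (z ∘ σ) (iotaEmb n q ρ j1 h π i))))))
      = ∑ σ : Equiv.Perm (Fin (((q + 1) + (n + 1)) + (q + 1 + n))),
          (((Equiv.Perm.sign (Equiv.swap (0 : Fin (n + 1)) j1) : ℤ) : K) *
            ((((q + 1).factorial * (n + 1).factorial : K))⁻¹ *
              ((Equiv.Perm.sign π : ℤ) : K))) •
            (((Equiv.Perm.sign σ : ℤ) : K) •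
              (fPfun n q τ ρ j1 h π (z ∘ σ) •
                gfun n φ (fun i => (z ∘ σ) (iotaEmb n q ρ j1 h π i)))) := by
        refine Finset.sum_congr rfl fun σ _ => ?_
        simp only [smul_smul]
        congr 1
        ring
    _ = (((Equiv.Perm.sign (Equiv.swap (0 : Fin (n + 1)) j1) : ℤ) : K) *
            ((((q + 1).factorial * (n + 1).factorial : K))⁻¹ *
              ((Equiv.Perm.sign π : ℤ) : K))) •
          ∑ σ : Equiv.Perm (Fin (((q + 1) + (n + 1)) + (q + 1 + n))),
            ((Equiv.Perm.sign σ : ℤ) : K) •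
              (fPfun n q τ ρ j1 h π (z ∘ σ) •
                gfun n φ (fun i => (z ∘ σ) (iotaEmb n q ρ j1 h π i))) :=
        (Finset.smul_sum).symm
    _ = 0 := by rw [show (∑ σ : Equiv.Perm (Fin (((q + 1) + (n + 1)) + (q + 1 + n))),
            ((Equiv.Perm.sign σ : ℤ) : K) •
              (fPfun n q τ ρ j1 h π (z ∘ σ) •
                gfun n φ (fun i => (z ∘ σ) (iotaEmb n q ρ j1 h π i)))) = 0 from hcore,
          smul_zero]

end Case2

/-- if φ (an alternating vector-valued (n+1)-form) satisfies the
generalized Jacobi identity i_φ φ = 0 and τ is a φ-compatible (q+1)-form, then τ∧φ also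
satisfies the generalized Jacobi identity. -/
theorem wedge_GJI (n q : ℕ) (φ : V [⋀^Fin (n + 1)]→ₗ[K] V)
    (τ : V [⋀^Fin (q + 1)]→ₗ[K] K)
    (hGJI : ∀ x : Fin ((n + 1) + n) → V, interiorProd (K := K) (n + 1) n ⇑φ ⇑φ x = 0)
    (hcompat : ∀ (x : Fin (n + 1) → V) (y : Fin q → V), τ (Fin.cons (φ x) y) = 0) :
    ∀ z : Fin (((q + 1) + (n + 1)) + (q + 1 + n)) → V,
      interiorProd (K := K) ((q + 1) + (n + 1)) (q + 1 + n)
        (wedgeProd (q + 1) (n + 1) ⇑τ ⇑φ) (wedgeProd (q + 1) (n + 1) ⇑τ ⇑φ) z = 0 := by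
  intro z
  have e1 : interiorProd (K := K) ((q + 1) + (n + 1)) (q + 1 + n)
        (wedgeProd (q + 1) (n + 1) ⇑τ ⇑φ) (wedgeProd (q + 1) (n + 1) ⇑τ ⇑φ) z
      = ((((q + 1) + (n + 1)).factorial * (q + 1 + n).factorial : K))⁻¹ •
        ∑ σ : Equiv.Perm (Fin (((q + 1) + (n + 1)) + (q + 1 + n))),
          ((Equiv.Perm.sign σ : ℤ) : K) •
            ((((q + 1).factorial * (n + 1).factorial : K))⁻¹ •
              ∑ ρ : Equiv.Perm (Fin ((q + 1) + (n + 1))),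
                ((Equiv.Perm.sign ρ : ℤ) : K) • Gbody n q φ τ ρ (z ∘ σ)) := rfl
  rw [e1]
  refine smul_eq_zero_of_right _ ?_
  simp only [Finset.smul_sum]
  rw [Finset.sum_comm]
  refine Finset.sum_eq_zero fun ρ _ => ?_
  have hz : ∑ σ : Equiv.Perm (Fin (((q + 1) + (n + 1)) + (q + 1 + n))),
      ((Equiv.Perm.sign σ : ℤ) : K) • Gbody n q φ τ ρ (z ∘ σ) = 0 := by
    have h0 : ρ (ρ.symm 0) = 0 := ρ.apply_symm_apply 0
    have hsplit : (∃ i0 : Fin (q + 1), ρ (Fin.castAdd (n + 1) i0) = 0) ∨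
        (∃ j1 : Fin (n + 1), ρ (Fin.natAdd (q + 1) j1) = 0) := by
      refine Fin.addCases (motive := fun c => ρ.symm 0 = c →
        ((∃ i0 : Fin (q + 1), ρ (Fin.castAdd (n + 1) i0) = 0) ∨
          (∃ j1 : Fin (n + 1), ρ (Fin.natAdd (q + 1) j1) = 0))) ?_ ?_ (ρ.symm 0) rfl
      · intro i0 hc
        exact Or.inl ⟨i0, by rw [← hc]; exact h0⟩
      · intro j1' hc
        exact Or.inr ⟨j1', by rw [← hc]; exact h0⟩
    rcases hsplit with ⟨i0, h⟩ | ⟨j1, h⟩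
    · exact Finset.sum_eq_zero fun σ _ => by
        rw [Gbody_case1 n q φ τ hcompat ρ i0 h (z ∘ σ), smul_zero]
    · exact Gbody_case2 n q φ τ ρ j1 hGJI h z
  calc ∑ σ : Equiv.Perm (Fin (((q + 1) + (n + 1)) + (q + 1 + n))),
        ((Equiv.Perm.sign σ : ℤ) : K) •
          ((((q + 1).factorial * (n + 1).factorial : K))⁻¹ •
            (((Equiv.Perm.sign ρ : ℤ) : K) • Gbody n q φ τ ρ (z ∘ σ)))
      = ∑ σ : Equiv.Perm (Fin (((q + 1) + (n + 1)) + (q + 1 + n))),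
          ((((q + 1).factorial * (n + 1).factorial : K))⁻¹ *
            ((Equiv.Perm.sign ρ : ℤ) : K)) •
            (((Equiv.Perm.sign σ : ℤ) : K) • Gbody n q φ τ ρ (z ∘ σ)) := by
        refine Finset.sum_congr rfl fun σ _ => ?_
        simp only [smul_smul]
        congr 1
        ring
    _ = ((((q + 1).factorial * (n + 1).factorial : K))⁻¹ *
          ((Equiv.Perm.sign ρ : ℤ) : K)) •
        ∑ σ : Equiv.Perm (Fin (((q + 1) + (n + 1)) + (q + 1 + n))),
          ((Equiv.Perm.sign σ : ℤ) : K) • Gbody n q φ τ ρ (z ∘ σ) :=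
        (Finset.smul_sum).symm
    _ = 0 := by rw [hz, smul_zero]
end

section
/- Let V be an m-dimensional vector space, U ⊆ V a subspace of dimension m−p with basis u_1,…,u_{m−p}, and define τ ∈ Λ^p(V) by τ(v_1,…,v_p) = det(v_1,…,v_p,u_1,…,u_{m−p}) (determinant with respect to a fixed basis). Then for all v_1,…,v_{p−1} ∈ V, (i_{v_1⋯v_{p−1}}τ) ∧ τ = 0 as a (p+1)-form. -/
set_option linter.unusedSectionVars false
set_option linter.unusedVariables false

variable {K : Type*} [Field K] [CharZero K]

def tauDet (s r : ℕ) (u : Fin r → (Fin (s + 1 + r) → K))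
    (w : Fin (s + 1) → (Fin (s + 1 + r) → K)) : K :=
  (Matrix.of fun i j : Fin (s + 1 + r) => Fin.append w u j i).det

lemma succAbove_val (n : ℕ) (t : Fin (n+1)) (a : Fin n) :
    (t.succAbove a).val = if a.val < t.val then a.val else a.val + 1 := by
  rw [Fin.succAbove]
  split_ifs with h1 h2 h3 <;> simp_all [Fin.lt_def]

lemma append_val {α : Sort*} {p q : ℕ} (f : Fin p → α) (g : Fin q → α) (a : Fin (p+q)) :
    Fin.append f g a = if h : a.val < p then f ⟨a.val, h⟩
      else g ⟨a.val - p, by have := a.isLt; omega⟩ := by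
  rcases lt_or_ge a.val p with h | h
  · rw [dif_pos h]
    conv_lhs => rw [show a = Fin.castAdd q ⟨a.val, h⟩ from Fin.ext rfl]
    rw [Fin.append_left]
  · rw [dif_neg (by omega)]
    have ha : a = Fin.natAdd p ⟨a.val - p, by have := a.isLt; omega⟩ := by
      apply Fin.ext; simp; omega
    conv_lhs => rw [ha]
    rw [Fin.append_right]

lemma snoc_val {α : Type*} {p : ℕ} (f : Fin p → α) (x : α) (a : Fin (p+1)) :
    (Fin.snoc f x : Fin (p+1) → α) a = if h : a.val < p then f ⟨a.val, h⟩ else x := by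
  rcases lt_or_ge a.val p with h | h
  · rw [dif_pos h]
    simp only [Fin.snoc, dif_pos h, cast_eq]
    rfl
  · rw [dif_neg (by omega)]
    simp only [Fin.snoc, dif_neg (show ¬ a.val < p by omega), cast_eq]

lemma tauDet_eq (s r : ℕ) (u : Fin r → (Fin (s + 1 + r) → K))
    (w : Fin (s + 1) → (Fin (s + 1 + r) → K)) :
    tauDet s r u w = Matrix.detRowAlternating (Fin.append w u) := by
  rw [tauDet, ← Matrix.det_transpose]
  rfl

/-- Step A: the extended matrix has determinant zero. -/
lemma detM_zero (m : ℕ) (z : Fin (m+1) → (Fin m → K)) (ℓ : (Fin m → K) →ₗ[K] K) :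
    (Matrix.of fun t c => Fin.snoc (z t) (ℓ (z t)) c).det = 0 := by
  set R : Fin (m+1) → (Fin (m+1) → K) :=
    fun c t => (Fin.snoc (z t) (ℓ (z t)) : Fin (m+1) → K) c with hR
  have hM : (Matrix.of fun t c => Fin.snoc (z t) (ℓ (z t)) c) = (Matrix.of R).transpose := rfl
  rw [hM, Matrix.det_transpose]
  set d' : (Fin (m+1) → K) [⋀^Fin (m+1)]→ₗ[K] K := Matrix.detRowAlternating with hd'
  set ℓ' : ((Fin (m+1) → K) →ₗ[K] K) := d'.toMultilinearMap.toLinearMap R (Fin.last m) with hℓ'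
  show d' R = 0
  have hRlast : R (Fin.last m) = fun t => ℓ (z t) := by
    funext t; simp [hR]
  have hRcast : ∀ i : Fin m, R (Fin.castSucc i) = fun t => z t i := by
    intro i; funext t; simp [hR]
  have h1 : ℓ' (fun t => ℓ (z t)) = d' R := by
    rw [hℓ']
    simp only [MultilinearMap.toLinearMap_apply]
    rw [← hRlast, Function.update_eq_self]
    rfl
  rw [← h1]
  have h2 : (fun t => ℓ (z t)) =
      ∑ i : Fin m, (ℓ fun j => if i = j then 1 else 0) • R (Fin.castSucc i) := by
    funext t
    rw [Finset.sum_apply]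
    rw [LinearMap.pi_apply_eq_sum_univ ℓ (z t)]
    refine Finset.sum_congr rfl fun i _ => ?_
    simp [hRcast i, mul_comm]
  rw [h2, map_sum]
  refine Finset.sum_eq_zero fun i _ => ?_
  rw [map_smul]
  have h3 : ℓ' (R (Fin.castSucc i)) = 0 := by
    rw [hℓ']
    simp only [MultilinearMap.toLinearMap_apply]
    refine AlternatingMap.map_eq_zero_of_eq _ _
      (i := Fin.castSucc i) (j := Fin.last m) ?_ ?_
    · rw [Function.update_of_ne (Fin.castSucc_lt_last i).ne, Function.update_self]
    · exact (Fin.castSucc_lt_last i).ne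
  rw [h3, smul_zero]

/-- Step B: Laplace expansion of the extended matrix along the last column. -/
lemma detM_expand (m : ℕ) (z : Fin (m+1) → (Fin m → K)) (ℓ : (Fin m → K) →ₗ[K] K) :
    (Matrix.of fun t c => Fin.snoc (z t) (ℓ (z t)) c).det
      = ∑ t : Fin (m+1), (-1 : K) ^ (t.val + m) *
        (ℓ (z t)) * Matrix.detRowAlternating (z ∘ t.succAbove) := by
  rw [Matrix.det_succ_column _ (Fin.last m)]
  refine Finset.sum_congr rfl fun t _ => ?_
  have h1 : (Matrix.of fun t c => Fin.snoc (z t) (ℓ (z t)) c) t (Fin.last m) = ℓ (z t) := by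
    simp only [Matrix.of_apply]
    exact Fin.snoc_last _ _
  have h2 : ((Matrix.of fun t c => Fin.snoc (z t) (ℓ (z t)) c).submatrix
      t.succAbove (Fin.last m).succAbove).det = Matrix.detRowAlternating (z ∘ t.succAbove) := by
    have hsub : ((Matrix.of fun t c => Fin.snoc (z t) (ℓ (z t)) c).submatrix
        t.succAbove (Fin.last m).succAbove) = Matrix.of fun a b => z (t.succAbove a) b := by
      ext a b
      simp [Fin.succAbove_last, Matrix.submatrix_apply]
    rw [hsub]
    rfl
  rw [h1, h2, Fin.val_last]

/-- Steps A+B combined. -/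
lemma key_sum (m : ℕ) (z : Fin (m+1) → (Fin m → K)) (ℓ : (Fin m → K) →ₗ[K] K) :
    ∑ t : Fin (m+1), (-1 : K) ^ (t.val + m) *
        (ℓ (z t)) * Matrix.detRowAlternating (z ∘ t.succAbove) = 0 := by
  rw [← detM_expand, detM_zero]

/-- The rows of the big matrix: `w 0, …, w (s+1), u 0, …, u (r-1)`. -/
def zfam (s r : ℕ) (u : Fin r → (Fin (s + 1 + r) → K))
    (w : Fin (s + 2) → (Fin (s + 1 + r) → K)) (t : Fin (s + 1 + r + 1)) : Fin (s + 1 + r) → K :=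
  if h : t.val < s + 2 then w ⟨t.val, h⟩ else u ⟨t.val - (s + 2), by have := t.isLt; omega⟩

/-- The linear functional `x ↦ det(v₁,…,v_s,x,u₁,…,u_r)`. -/
def phiMap (s r : ℕ) (v : Fin s → (Fin (s + 1 + r) → K))
    (u : Fin r → (Fin (s + 1 + r) → K)) : (Fin (s + 1 + r) → K) →ₗ[K] K :=
  (Matrix.detRowAlternating :
      (Fin (s + 1 + r) → K) [⋀^Fin (s + 1 + r)]→ₗ[K] K).toMultilinearMap.toLinearMap
    (Fin.append (Fin.snoc v 0) u) (Fin.castAdd r (Fin.last s))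

lemma phi_eq (s r : ℕ) (v : Fin s → (Fin (s + 1 + r) → K))
    (u : Fin r → (Fin (s + 1 + r) → K)) (x : Fin (s + 1 + r) → K) :
    tauDet s r u (Fin.snoc v x) = phiMap s r v u x := by
  rw [tauDet_eq, phiMap]
  simp only [MultilinearMap.toLinearMap_apply]
  have hupd : Fin.append (Fin.snoc v x) u
      = Function.update (Fin.append (Fin.snoc v (0 : Fin (s + 1 + r) → K)) u)
        (Fin.castAdd r (Fin.last s)) x := by
    funext a
    rw [Function.update_apply]
    simp only [append_val, snoc_val]
    split_ifs <;> try rfl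
    all_goals (exfalso; simp only [Fin.ext_iff, Fin.coe_castAdd, Fin.val_last] at *; omega)
  rw [hupd]
  rfl

lemma phi_u_zero (s r : ℕ) (v : Fin s → (Fin (s + 1 + r) → K))
    (u : Fin r → (Fin (s + 1 + r) → K)) (j : Fin r) : phiMap s r v u (u j) = 0 := by
  rw [← phi_eq, tauDet_eq]
  refine AlternatingMap.map_eq_zero_of_eq _ _
    (i := Fin.castAdd r (Fin.last s)) (j := Fin.natAdd (s+1) j) ?_ ?_
  · rw [Fin.append_left, Fin.append_right, Fin.snoc_last]
  · simp only [ne_eq, Fin.ext_iff]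
    simp [Fin.castAdd, Fin.natAdd, Fin.last]
    omega

lemma zfam_succAbove (s r : ℕ) (u : Fin r → (Fin (s + 1 + r) → K))
    (w : Fin (s + 2) → (Fin (s + 1 + r) → K)) (t : Fin (s + 1 + r + 1)) (h : t.val < s + 2) :
    zfam s r u w ∘ t.succAbove = Fin.append (w ∘ (⟨t.val, h⟩ : Fin (s + 2)).succAbove) u := by
  funext a
  have hq := succAbove_val (s+1+r) t a
  simp only [Function.comp_apply]
  rw [zfam, append_val]
  by_cases h1 : a.val < s + 1
  · rw [dif_pos h1, dif_pos (by rw [hq]; split_ifs <;> omega)]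
    simp only [Function.comp_apply]
    refine congrArg w (Fin.ext ?_)
    rw [succAbove_val, succAbove_val]
  · rw [dif_neg h1]
    have hqv : (t.succAbove a).val = a.val + 1 := by rw [hq, if_neg (by omega)]
    rw [dif_neg (by omega)]
    refine congrArg u (Fin.ext ?_)
    simp only [hqv]
    omega

/-- with τ the determinant form associated to a basis u_1,…,u_r of a
subspace of codimension p = s+1 of the m-dimensional space V = Fin (s+1+r) → K, one has
(i_{v_1⋯v_s}τ)∧τ = 0 as a (p+1)-form, for all v_1,…,v_s. -/
theorem det_form_wedge_zero (s r : ℕ) (u : Fin r → (Fin (s + 1 + r) → K))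
    (hu : LinearIndependent K u) :
    ∀ (v : Fin s → (Fin (s + 1 + r) → K)) (w : Fin (s + 2) → (Fin (s + 1 + r) → K)),
      ∑ k : Fin (s + 2), (-1 : K) ^ k.val *
        (tauDet s r u (Fin.snoc v (w k)) * tauDet s r u (w ∘ k.succAbove)) = 0 := by
  intro v w
  have hkey := key_sum (s+1+r) (zfam s r u w) (phiMap s r v u)
  set G : ℕ → K := fun n => if h : n < s + 2 then (-1 : K) ^ (n + (s+1+r)) *
      (tauDet s r u (Fin.snoc v (w ⟨n, h⟩)) *
       tauDet s r u (w ∘ (⟨n, h⟩ : Fin (s + 2)).succAbove)) else 0 with hG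
  have hterm : ∀ t : Fin (s+1+r+1),
      (-1 : K) ^ (t.val + (s+1+r)) * (phiMap s r v u (zfam s r u w t)) *
        Matrix.detRowAlternating (zfam s r u w ∘ t.succAbove) = G t.val := by
    intro t
    by_cases h : t.val < s + 2
    · rw [hG]
      simp only
      rw [dif_pos h]
      have hz : zfam s r u w t = w ⟨t.val, h⟩ := by rw [zfam, dif_pos h]
      rw [hz, ← phi_eq, zfam_succAbove s r u w t h, ← tauDet_eq]
      ring
    · rw [hG]
      simp only
      rw [dif_neg h]
      have hz : zfam s r u w t = u ⟨t.val - (s+2), by have := t.isLt; omega⟩ := by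
        rw [zfam, dif_neg h]
      rw [hz, phi_u_zero, mul_zero, zero_mul]
  rw [Finset.sum_congr rfl (fun t _ => hterm t)] at hkey
  have hrange : ∑ t : Fin (s+1+r+1), G t.val = ∑ n ∈ Finset.range (s+1+r+1), G n :=
    Fin.sum_univ_eq_sum_range G (s+1+r+1)
  rw [hrange] at hkey
  have hsub : ∑ n ∈ Finset.range (s+1+r+1), G n = ∑ n ∈ Finset.range (s+2), G n := by
    refine (Finset.sum_subset (Finset.range_subset_range.2 (by omega)) fun x _ hx => ?_).symm
    rw [hG]
    simp only
    rw [dif_neg (by simpa using hx)]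
  rw [hsub] at hkey
  have hfin : ∑ n ∈ Finset.range (s+2), G n = ∑ k : Fin (s+2), G k.val :=
    (Fin.sum_univ_eq_sum_range G (s+2)).symm
  rw [hfin] at hkey
  have hGk : ∀ k : Fin (s+2), G k.val = (-1 : K) ^ (k.val + (s+1+r)) *
      (tauDet s r u (Fin.snoc v (w k)) * tauDet s r u (w ∘ k.succAbove)) := by
    intro k
    rw [hG]
    simp only
    rw [dif_pos k.isLt]
  rw [Finset.sum_congr rfl (fun k _ => hGk k)] at hkey
  have hsq : (-1 : K) ^ (s+1+r) * (-1 : K) ^ (s+1+r) = 1 := by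
    rw [← pow_add, ← two_mul, pow_mul]
    norm_num
  calc ∑ k : Fin (s + 2), (-1 : K) ^ k.val *
        (tauDet s r u (Fin.snoc v (w k)) * tauDet s r u (w ∘ k.succAbove))
      = (-1 : K) ^ (s+1+r) * ∑ k : Fin (s+2), (-1 : K) ^ (k.val + (s+1+r)) *
        (tauDet s r u (Fin.snoc v (w k)) * tauDet s r u (w ∘ k.succAbove)) := by
        rw [Finset.mul_sum]
        refine Finset.sum_congr rfl fun k _ => ?_
        rw [pow_add]
        linear_combination (-(-1 : K) ^ k.val *
          (tauDet s r u (Fin.snoc v (w k)) * tauDet s r u (w ∘ k.succAbove))) * hsq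
    _ = 0 := by rw [hkey, mul_zero]
end

section
/- For a vector-valued alternating k-form φ, a scalar p-form τ, and a form ψ, the interior product satisfies the Leibniz-type rule i_φ(τ∧ψ) = (i_φ τ)∧ψ + (−1)^{(k−1)p} τ∧(i_φ ψ). -/
set_option linter.unusedSectionVars false

variable {K V W : Type*} [Field K] [CharZero K] [AddCommGroup V] [Module K V]
  [AddCommGroup W] [Module K W]

open Equiv Finset

/-!
Let `alternatize g x = ∑ σ, sign σ • g (x ∘ σ)`; `interiorProd` and `wedgeProd` are factorial
multiples of it. An `alternatize` over a block of `b` variables nested inside an outer one is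
absorbed, at the cost of a factor `b!`. Sorting the permutations of `Fin (n + 1)` by where they
send the first slot gives `alternatize T (v, z) = ∑ j, (-1)^j • alternatize (T ∘ insertNth j v) z`,
which for `T u = τ (…) • ψ (…)` becomes, up to factorials, the graded derivation rule
`(τ ∧ ψ)(v, z) = (i_v τ ∧ ψ)(z) + (-1)^(p+1) (τ ∧ i_v ψ)(z)`.
Taking `v = φ(x₀, …, x_k)` splits the left-hand side into the alternations of
`τ(φ(…), …) • ψ(…)` and `τ(…) • ψ(φ(…), …)`. The first is `(i_φ τ) ∧ ψ` after absorption; the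
second is `τ ∧ i_φ ψ` after moving the `k + 1` slots of `φ` past the `p + 1` slots of `τ`, a
permutation of sign `(-1)^((k+1)(p+1))`, which combines with `(-1)^(k(p+1))` into `(-1)^(p+1)`.
-/

theorem units_neg_one_pow_smul {R N : Type*} [Ring R] [AddCommGroup N] [Module R N] (n : ℕ)
    (y : N) : ((-1 : ℤˣ) ^ n) • y = ((-1 : R) ^ n) • y := by
  rw [Units.smul_def, ← Int.cast_smul_eq_zsmul R]
  push_cast
  rfl

theorem Nat.cast_factorial_ne_zero {R : Type*} [AddMonoidWithOne R] [CharZero R] (n : ℕ) :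
    (n.factorial : R) ≠ 0 :=
  Nat.cast_ne_zero.2 n.factorial_ne_zero

section Alternatize

variable {ι κ α M : Type*} [Fintype ι] [DecidableEq ι] [Fintype κ] [DecidableEq κ]
  [AddCommGroup M]

def alternatize (g : (ι → α) → M) (x : ι → α) : M :=
  ∑ σ : Perm ι, Perm.sign σ • g (x ∘ σ)

theorem alternatize_add (g h : (ι → α) → M) (x : ι → α) :
    alternatize (fun u => g u + h u) x = alternatize g x + alternatize h x := by
  simp only [alternatize, smul_add, sum_add_distrib]

theorem alternatize_sum {β : Type*} (s : Finset β) (g : β → (ι → α) → M) (x : ι → α) :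
    alternatize (fun u => ∑ e ∈ s, g e u) x = ∑ e ∈ s, alternatize (g e) x := by
  simp only [alternatize, smul_sum]
  exact sum_comm

theorem alternatize_smul {R : Type*} [Monoid R] [DistribMulAction R M] (c : R)
    (g : (ι → α) → M) (x : ι → α) : alternatize (fun u => c • g u) x = c • alternatize g x := by
  simp only [alternatize, smul_sum, smul_comm c]

theorem alternatize_smul_const {R : Type*} [Ring R] [Module R M] (g : (ι → α) → R) (w : M)
    (x : ι → α) : alternatize g x • w = alternatize (fun u => g u • w) x := by
  simp only [alternatize, sum_smul, Units.smul_def, smul_assoc]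

theorem alternatize_comp_perm (π : Perm ι) (g : (ι → α) → M) (x : ι → α) :
    alternatize (fun u => g (u ∘ π)) x = Perm.sign π • alternatize g x := by
  rw [alternatize, alternatize, smul_sum]
  refine Fintype.sum_equiv (Equiv.mulRight π) _ _ fun σ => ?_
  simp only [coe_mulRight, map_mul, smul_smul, mul_left_comm (Perm.sign π), Int.units_mul_self,
    mul_one]
  rfl

theorem alternatize_comp_equiv (e : ι ≃ κ) (g : (ι → α) → M) (x : κ → α) :
    alternatize g (x ∘ e) = alternatize (fun u => g (u ∘ e)) x := by
  refine Fintype.sum_equiv e.permCongr _ _ fun σ => ?_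
  rw [Perm.sign_permCongr]
  congr 2
  ext i
  simp [Equiv.permCongr_apply]

theorem alternatize_comp_cast {m n : ℕ} (h : m = n) (g : (Fin m → α) → M) (x : Fin n → α) :
    alternatize g (x ∘ Fin.cast h) = alternatize (fun u => g (u ∘ Fin.cast h)) x :=
  alternatize_comp_equiv (finCongr h) g x

theorem alternatize_sum_comp (L : Perm κ → Perm ι) (hL : ∀ e, Perm.sign (L e) = Perm.sign e)
    (g : (ι → α) → M) (x : ι → α) :
    alternatize (fun u => ∑ e, Perm.sign e • g (u ∘ L e)) x
      = (Fintype.card κ).factorial • alternatize g x := by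
  have : ∀ e, alternatize (fun u => Perm.sign e • g (u ∘ L e)) x = alternatize g x := by
    intro e
    rw [alternatize_smul, alternatize_comp_perm, hL, smul_smul, Int.units_mul_self, one_smul]
  rw [alternatize_sum, sum_congr rfl fun e _ => this e, sum_const, card_univ,
    Fintype.card_perm]

theorem alternatize_alternatize_castAdd {a b : ℕ} (F : (Fin a → α) → (Fin b → α) → M)
    (x : Fin (a + b) → α) :
    alternatize (fun u => alternatize (fun w => F w (u ∘ Fin.natAdd a)) (u ∘ Fin.castAdd b)) x
      = a.factorial • alternatize (fun u => F (u ∘ Fin.castAdd b) (u ∘ Fin.natAdd a)) x := by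
  have absorb := alternatize_sum_comp
    (fun e : Perm (Fin a) => finSumFinEquiv.permCongr (e.sumCongr 1))
    (fun e => by simp [Perm.sign_permCongr, Perm.sign_sumCongr])
    (fun u => F (u ∘ Fin.castAdd b) (u ∘ Fin.natAdd a)) x
  rw [Fintype.card_fin] at absorb
  rw [← absorb]
  unfold alternatize
  refine sum_congr rfl fun σ _ => ?_
  congr 1
  refine sum_congr rfl fun e _ => ?_
  dsimp only
  congr 2 <;> funext i <;> simp [permCongr_apply]

theorem alternatize_alternatize_natAdd {a b : ℕ} (F : (Fin a → α) → (Fin b → α) → M)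
    (x : Fin (a + b) → α) :
    alternatize (fun u => alternatize (fun w => F (u ∘ Fin.castAdd b) w) (u ∘ Fin.natAdd a)) x
      = b.factorial • alternatize (fun u => F (u ∘ Fin.castAdd b) (u ∘ Fin.natAdd a)) x := by
  have absorb := alternatize_sum_comp
    (fun e : Perm (Fin b) => finSumFinEquiv.permCongr (Perm.sumCongr 1 e))
    (fun e => by simp [Perm.sign_permCongr, Perm.sign_sumCongr])
    (fun u => F (u ∘ Fin.castAdd b) (u ∘ Fin.natAdd a)) x
  rw [Fintype.card_fin] at absorb
  rw [← absorb]
  unfold alternatize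
  refine sum_congr rfl fun σ _ => ?_
  congr 1
  refine sum_congr rfl fun e _ => ?_
  dsimp only
  congr 2 <;> funext i <;> simp [permCongr_apply]

theorem bijective_decomposeFin_symm_mul_cycleRange (n : ℕ) :
    Function.Bijective fun je : Fin (n + 1) × Perm (Fin n) =>
      Perm.decomposeFin.symm (0, je.2) * je.1.cycleRange := by
  refine (Fintype.bijective_iff_injective_and_card _).2 ⟨?_, by simp [Fintype.card_perm,
    Nat.factorial_succ]⟩
  rintro ⟨j, e⟩ ⟨j', e'⟩ (h : _ * _ = _ * _)
  have key : ∀ (j : Fin (n + 1)) (e : Perm (Fin n)),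
      (Perm.decomposeFin.symm (0, e) * j.cycleRange)⁻¹ 0 = j := fun j e => by
    rw [Perm.inv_def, Equiv.symm_apply_eq, Perm.mul_apply, Fin.cycleRange_self,
      Perm.decomposeFin_symm_apply_zero]
  have hj : j = j' := by rw [← key j e, ← key j' e', h]
  subst hj
  simpa using Perm.decomposeFin.symm.injective (mul_right_cancel h)

theorem alternatize_cons {n : ℕ} (T : (Fin (n + 1) → α) → M) (v : α) (z : Fin n → α) :
    alternatize T (Fin.cons v z)
      = ∑ j : Fin (n + 1), (-1 : ℤˣ) ^ (j : ℕ) • alternatize (fun w => T (j.insertNth v w)) z := by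
  simp only [alternatize, smul_sum, ← Fintype.sum_prod_type']
  refine (Fintype.sum_bijective _ (bijective_decomposeFin_symm_mul_cycleRange n) _ _
    fun ⟨j, e⟩ => ?_).symm
  have hx : (Fin.cons v z : Fin (n + 1) → α) ∘ (Perm.decomposeFin.symm (0, e) * j.cycleRange)
      = j.insertNth v (z ∘ e) := by
    rw [Perm.coe_mul, ← Function.comp_assoc, ← Fin.cons_comp_cycleRange]
    congr 1
    funext i
    refine Fin.cases ?_ (fun i => ?_) i <;> simp [Perm.decomposeFin_symm_apply_succ]
  simp only [hx, Perm.sign_mul, Perm.decomposeFin.symm_sign, Fin.sign_cycleRange, smul_smul,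
    if_pos, one_mul, mul_comm]

end Alternatize

section InsertNth

variable {α : Type*} {p q : ℕ}

theorem Fin.insertNth_apply_eq_dite {n : ℕ} (j i : Fin (n + 1)) (v : α) (w : Fin n → α) :
    Fin.insertNth (α := fun _ => α) j v w i = if h : (i : ℕ) = j then v
      else w ⟨if (i : ℕ) < j then i else i - 1, by
        have := i.isLt; have := j.isLt; split_ifs <;> omega⟩ := by
  rcases lt_trichotomy i j with h | rfl | h
  · rw [Fin.insertNth_apply_below h, dif_neg (Fin.val_ne_of_ne h.ne)]
    simp only [eq_rec_constant, Fin.lt_def.1 h, ↓reduceIte]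
    rfl
  · simp only [Fin.insertNth_apply_same, ↓reduceDIte]
  · rw [Fin.insertNth_apply_above h, dif_neg (Fin.val_ne_of_ne h.ne')]
    simp only [eq_rec_constant, (Fin.lt_def.1 h).not_gt, ↓reduceIte]
    rfl

theorem Fin.insertNth_castAdd_comp_castAdd (a : Fin (p + 1)) (v : α) (w : Fin (p + 1 + q) → α)
    (h : p + (q + 1) = p + 1 + q) :
    (Fin.insertNth (Fin.castAdd (q + 1) a) v w : Fin (p + 1 + (q + 1)) → α) ∘ Fin.castAdd (q + 1)
      = a.insertNth v ((w ∘ Fin.cast h) ∘ Fin.castAdd (q + 1)) := by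
  funext i
  simp only [Function.comp_apply, Fin.insertNth_apply_eq_dite, Fin.val_castAdd]
  split_ifs <;> rfl

theorem Fin.insertNth_castAdd_comp_natAdd (a : Fin (p + 1)) (v : α) (w : Fin (p + 1 + q) → α)
    (h : p + (q + 1) = p + 1 + q) :
    (Fin.insertNth (Fin.castAdd (q + 1) a) v w : Fin (p + 1 + (q + 1)) → α) ∘ Fin.natAdd (p + 1)
      = (w ∘ Fin.cast h) ∘ Fin.natAdd p := by
  funext i
  simp only [Function.comp_apply, Fin.insertNth_apply_eq_dite, Fin.val_castAdd, Fin.val_natAdd]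
  split_ifs <;> first | rfl | omega | (congr 1; ext; simp; try omega)

theorem Fin.insertNth_natAdd_comp_castAdd (b : Fin (q + 1)) (v : α) (w : Fin (p + 1 + q) → α) :
    (Fin.insertNth (Fin.natAdd (p + 1) b) v w : Fin (p + 1 + (q + 1)) → α) ∘ Fin.castAdd (q + 1)
      = w ∘ Fin.castAdd q := by
  funext i
  simp only [Function.comp_apply, Fin.insertNth_apply_eq_dite, Fin.val_castAdd, Fin.val_natAdd]
  split_ifs <;> first | rfl | omega

theorem Fin.insertNth_natAdd_comp_natAdd (b : Fin (q + 1)) (v : α) (w : Fin (p + 1 + q) → α) :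
    (Fin.insertNth (Fin.natAdd (p + 1) b) v w : Fin (p + 1 + (q + 1)) → α) ∘ Fin.natAdd (p + 1)
      = b.insertNth v (w ∘ Fin.natAdd (p + 1)) := by
  funext i
  simp only [Function.comp_apply, Fin.insertNth_apply_eq_dite, Fin.val_natAdd, add_right_inj,
    add_lt_add_iff_left]
  split_ifs <;> first | rfl | omega | (congr 1; ext; simp; try omega)

end InsertNth

section WedgeCons

variable {R M N : Type*} [CommRing R] [AddCommGroup M] [AddCommGroup N] [Module R M] [Module R N]
  {p q : ℕ}

theorem alternatize_wedge_cons (τ : M [⋀^Fin (p + 1)]→ₗ[R] R) (ψ : M [⋀^Fin (q + 1)]→ₗ[R] N)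
    (v : M) (z : Fin (p + 1 + q) → M) :
    alternatize (fun u : Fin (p + 1 + (q + 1)) → M =>
        τ (u ∘ Fin.castAdd (q + 1)) • ψ (u ∘ Fin.natAdd (p + 1)))
        (Fin.cons v z : Fin (p + 1 + q + 1) → M)
      = (p + 1) • alternatize (fun w : Fin (p + (q + 1)) → M =>
            τ (Fin.cons v (w ∘ Fin.castAdd (q + 1))) • ψ (w ∘ Fin.natAdd p))
          (z ∘ Fin.cast (by omega))
        + (-1 : ℤˣ) ^ (p + 1) • (q + 1) • alternatize (fun w =>
            τ (w ∘ Fin.castAdd q) • ψ (Fin.cons v (w ∘ Fin.natAdd (p + 1)))) z := by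
  refine (alternatize_cons (n := p + 1 + q) _ v z).trans ?_
  refine (Fin.sum_univ_add (a := p + 1) (b := q + 1) _).trans ?_
  simp only [Fin.insertNth_castAdd_comp_castAdd _ _ _ (show p + (q + 1) = p + 1 + q by omega),
    Fin.insertNth_castAdd_comp_natAdd _ _ _ (show p + (q + 1) = p + 1 + q by omega),
    Fin.insertNth_natAdd_comp_castAdd, Fin.insertNth_natAdd_comp_natAdd]
  simp only [AlternatingMap.map_insertNth, smul_assoc, smul_comm (τ _), alternatize_smul,
    Fin.val_castAdd, Fin.val_natAdd]
  have hsq : ∀ (n : ℕ) (y : N), ((-1 : ℤˣ) ^ n) • ((-1 : ℤ) ^ n) • y = y := fun n y => by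
    rw [Units.smul_def, smul_smul]
    simp [← mul_pow]
  simp only [pow_add (-1 : ℤˣ) (p + 1), mul_smul, hsq, sum_const, card_univ, Fintype.card_fin]
  rw [alternatize_comp_cast, smul_comm ((-1 : ℤˣ) ^ (p + 1))]
  rfl

end WedgeCons

theorem Fin.val_cycleRange_pow_of_le {n : ℕ} [NeZero n] {c i : Fin n} (h : i ≤ c) (m : ℕ) :
    ((c.cycleRange ^ m) i : ℕ) = (i + m) % (c + 1) := by
  induction m generalizing i with
  | zero => simp [Nat.mod_eq_of_lt (Nat.lt_succ_of_le (Fin.le_def.1 h))]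
  | succ m ih =>
    rw [pow_succ, Perm.mul_apply]
    rcases h.lt_or_eq with h | rfl
    · have h' := Fin.coe_cycleRange_of_lt h
      rw [ih (Fin.le_def.2 (h' ▸ Fin.lt_def.1 h)), h', Nat.add_right_comm, Nat.add_assoc]
    · rw [Fin.cycleRange_self, ih (Fin.zero_le _), Fin.val_zero, Nat.zero_add,
        ← Nat.add_assoc, Nat.add_right_comm, Nat.add_mod_left]

theorem Fin.cycleRange_pow_of_gt {n : ℕ} {c i : Fin n} (h : c < i) (m : ℕ) :
    (c.cycleRange ^ m) i = i :=
  Perm.pow_apply_eq_self_of_apply_eq_self (Fin.cycleRange_of_gt h) m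

theorem Fin.val_cycleRange_pow_succ {n a p : ℕ} [NeZero n] (h : a + p < n) (j : Fin n) :
    (((Fin.cycleRange ⟨a + p, h⟩) ^ (p + 1)) j : ℕ)
      = if (j : ℕ) < a then j + (p + 1) else if (j : ℕ) ≤ a + p then j - a else j := by
  split_ifs with h₁ h₂
  · rw [Fin.val_cycleRange_pow_of_le (Fin.le_def.2 (by simp; omega)),
      Nat.mod_eq_of_lt (by simp; omega)]
  · rw [Fin.val_cycleRange_pow_of_le (Fin.le_def.2 (by simpa using h₂)),
      show (j : ℕ) + (p + 1) = (j - a) + (a + p + 1) by omega, Nat.add_mod_right,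
      Nat.mod_eq_of_lt (by omega)]
  · rw [Fin.cycleRange_pow_of_gt (Fin.lt_def.2 (by simp; omega))]

theorem Fin.sign_cycleRange_pow {n : ℕ} (c : Fin n) (m : ℕ) :
    Perm.sign (c.cycleRange ^ m) = (-1) ^ ((c : ℕ) * m) := by
  rw [map_pow, Fin.sign_cycleRange, pow_mul]

theorem interiorProd_eq_smul_alternatize (k l : ℕ) (φ : (Fin k → V) → V)
    (ψ : (Fin (l + 1) → V) → W) (x : Fin (k + l) → V) :
    interiorProd (K := K) k l φ ψ x = ((k.factorial * l.factorial : K))⁻¹ •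
      alternatize (fun u => ψ (Fin.cons (φ (u ∘ Fin.castAdd l)) (u ∘ Fin.natAdd k))) x := by
  simp only [interiorProd, alternatize, Units.smul_def, Int.cast_smul_eq_zsmul]
  rfl

theorem wedgeProd_eq_smul_alternatize (p k : ℕ) (τ : (Fin p → V) → K) (φ : (Fin k → V) → W)
    (x : Fin (p + k) → V) :
    wedgeProd p k τ φ x = ((p.factorial * k.factorial : K))⁻¹ •
      alternatize (fun u => τ (u ∘ Fin.castAdd k) • φ (u ∘ Fin.natAdd p)) x := by
  simp only [wedgeProd, alternatize, Units.smul_def, Int.cast_smul_eq_zsmul]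
  rfl

section Leibniz

variable {k p q : ℕ} (φ : V [⋀^Fin (k + 1)]→ₗ[K] V) (τ : V [⋀^Fin (p + 1)]→ₗ[K] K)
  (ψ : V [⋀^Fin (q + 1)]→ₗ[K] W)

def interiorLeftTerm (u : Fin ((k + 1) + (p + 1 + q)) → V) : W :=
  τ (Fin.cons (φ fun i => u ⟨i, by omega⟩) fun a => u ⟨k + 1 + a, by omega⟩) •
    ψ fun j => u ⟨k + 1 + p + j, by omega⟩

def interiorRightTerm (u : Fin ((k + 1) + (p + 1 + q)) → V) : W :=
  τ (fun a => u ⟨k + 1 + a, by omega⟩) •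
    ψ (Fin.cons (φ fun i => u ⟨i, by omega⟩) fun t => u ⟨k + 1 + (p + 1) + t, by omega⟩)

theorem interiorProd_wedgeProd (x : Fin ((k + 1) + (p + 1 + q)) → V) :
    interiorProd (K := K) (k + 1) (p + 1 + q) φ (wedgeProd (K := K) (p + 1) (q + 1) τ ψ) x
      = (((k + 1).factorial * p.factorial * (q + 1).factorial : K))⁻¹ •
          alternatize (interiorLeftTerm φ τ ψ) x
        + ((-1) ^ (p + 1) * (((k + 1).factorial * (p + 1).factorial * q.factorial : K))⁻¹) •
          alternatize (interiorRightTerm φ τ ψ) x := by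
  simp only [interiorProd_eq_smul_alternatize, wedgeProd_eq_smul_alternatize, alternatize_smul]
  simp only [alternatize_wedge_cons, alternatize_add, alternatize_smul, alternatize_comp_cast]
  rw [alternatize_alternatize_natAdd (fun v w =>
      τ (Fin.cons (φ v) ((w ∘ Fin.cast (by omega)) ∘ Fin.castAdd (q + 1))) •
        ψ ((w ∘ Fin.cast (by omega)) ∘ Fin.natAdd p)),
    alternatize_alternatize_natAdd (fun v w =>
      τ (w ∘ Fin.castAdd q) • ψ (Fin.cons (φ v) (w ∘ Fin.natAdd (p + 1))))]
  simp only [smul_add, smul_smul, ← Nat.cast_smul_eq_nsmul K, units_neg_one_pow_smul (R := K)]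
  congr 2
  · rw [Nat.factorial_succ p]
    push_cast
    field_simp [Nat.cast_factorial_ne_zero (R := K)]
  · congr 1
    funext u
    unfold interiorLeftTerm
    congr! with i
    exact congrArg u (Fin.ext (by simp; omega))
  · rw [Nat.factorial_succ q]
    push_cast
    field_simp [Nat.cast_factorial_ne_zero (R := K)]
  · congr 1
    funext u
    unfold interiorRightTerm
    congr! with i
    exact congrArg u (Fin.ext (by simp; omega))

theorem wedgeProd_interiorProd_left (x : Fin ((k + 1) + (p + 1 + q)) → V)
    (h : (k + 1) + p + (q + 1) = (k + 1) + (p + 1 + q)) :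
    wedgeProd (K := K) ((k + 1) + p) (q + 1) (interiorProd (K := K) (k + 1) p φ τ) ψ
        (x ∘ Fin.cast h)
      = (((k + 1).factorial * p.factorial * (q + 1).factorial : K))⁻¹ •
          alternatize (interiorLeftTerm φ τ ψ) x := by
  simp only [wedgeProd_eq_smul_alternatize, interiorProd_eq_smul_alternatize, smul_assoc,
    alternatize_smul_const, alternatize_smul]
  rw [alternatize_alternatize_castAdd (fun w v =>
      τ (Fin.cons (φ (w ∘ Fin.castAdd p)) (w ∘ Fin.natAdd (k + 1))) • ψ v),
    alternatize_comp_cast, ← Nat.cast_smul_eq_nsmul K, smul_smul, smul_smul]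
  congr 1
  field_simp [Nat.cast_factorial_ne_zero (R := K)]

theorem wedgeProd_interiorProd_right (x : Fin ((k + 1) + (p + 1 + q)) → V)
    (h : (p + 1) + ((k + 1) + q) = (k + 1) + (p + 1 + q)) :
    wedgeProd (K := K) (p + 1) ((k + 1) + q) τ (interiorProd (K := K) (k + 1) q φ ψ)
        (x ∘ Fin.cast h)
      = ((-1) ^ ((k + 1 + p) * (p + 1)) *
          (((k + 1).factorial * (p + 1).factorial * q.factorial : K))⁻¹) •
          alternatize (interiorRightTerm φ τ ψ) x := by
  simp only [wedgeProd_eq_smul_alternatize, interiorProd_eq_smul_alternatize, smul_comm (τ _),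
    alternatize_smul]
  simp only [← alternatize_smul (τ _)]
  rw [alternatize_alternatize_natAdd (fun v w =>
      τ v • ψ (Fin.cons (φ (w ∘ Fin.castAdd q)) (w ∘ Fin.natAdd (k + 1)))),
    alternatize_comp_cast, ← Nat.cast_smul_eq_nsmul K, smul_smul, smul_smul]
  -- `π` moves the `k + 1` slots of `φ` in front of the `p + 1` slots of `τ`.
  set π := (Fin.cycleRange (⟨k + 1 + p, by omega⟩ : Fin ((k + 1) + (p + 1 + q)))) ^ (p + 1)
  rw [show alternatize (interiorRightTerm φ τ ψ) x
      = Perm.sign π • alternatize (fun u => interiorRightTerm φ τ ψ (u ∘ π)) x by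
    rw [alternatize_comp_perm, smul_smul, Int.units_mul_self, one_smul],
    Fin.sign_cycleRange_pow, units_neg_one_pow_smul (R := K), smul_smul]
  congr 1
  · field_simp [Nat.cast_factorial_ne_zero (R := K)]
    rw [← pow_mul, mul_comm, pow_mul, neg_one_sq, one_pow]
  · congr 1
    funext u
    simp only [interiorRightTerm, Function.comp_def]
    congr! with i
    all_goals ext; rw [Fin.val_cycleRange_pow_succ]; simp; split_ifs <;> omega

end Leibniz

/-- the Leibniz-type rule
i_φ(τ∧ψ) = (i_φ τ)∧ψ + (−1)^{(k−1)p} τ∧(i_φ ψ) for a vector-valued alternating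
(k+1)-form φ, a scalar (p+1)-form τ and a (q+1)-form ψ. -/
theorem interior_leibniz (k p q : ℕ) (φ : V [⋀^Fin (k + 1)]→ₗ[K] V)
    (τ : V [⋀^Fin (p + 1)]→ₗ[K] K) (ψ : V [⋀^Fin (q + 1)]→ₗ[K] W) :
    ∀ x : Fin ((k + 1) + (p + 1 + q)) → V,
      interiorProd (K := K) (k + 1) (p + 1 + q) ⇑φ
          (wedgeProd (K := K) (p + 1) (q + 1) ⇑τ ⇑ψ) x =
        wedgeProd (K := K) ((k + 1) + p) (q + 1)
            (interiorProd (K := K) (k + 1) p ⇑φ ⇑τ) ⇑ψ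
            (x ∘ Fin.cast (by omega : ((k + 1) + p) + (q + 1) = (k + 1) + (p + 1 + q)))
          + (-1 : K) ^ (k * (p + 1)) •
            wedgeProd (K := K) (p + 1) ((k + 1) + q) ⇑τ
              (interiorProd (K := K) (k + 1) q ⇑φ ⇑ψ)
              (x ∘ Fin.cast (by omega :
                (p + 1) + ((k + 1) + q) = (k + 1) + (p + 1 + q))) := by
  intro x
  have hsign : (-1 : K) ^ (k * (p + 1)) * (-1) ^ ((k + 1 + p) * (p + 1)) = (-1) ^ (p + 1) := by
    rw [← pow_add, show k * (p + 1) + (k + 1 + p) * (p + 1) = 2 * (k * (p + 1)) + p * (p + 1)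
      + (p + 1) by ring, pow_add, pow_add, pow_mul, neg_one_sq, one_pow, one_mul,
      (Nat.even_mul_succ_self p).neg_one_pow, one_mul]
  rw [interiorProd_wedgeProd, wedgeProd_interiorProd_left, wedgeProd_interiorProd_right, smul_smul,
    ← mul_assoc, hsign]
end
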